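/- arXiv:1901.03618 — 5 statements merged into one kernel-verified Lean document; each statement's English description precedes it below -/
import Mathlib

section
/- Let ρ̄ ∈ L^∞(ℝ) be nonnegative with ∫_{x̄_i}^{x̄_{i+1}} ρ̄ = ℓ_n for each i. Define R_i(0) = ℓ_n/(x̄_{i+1} − x̄_i). If ρ̄ ∈ BV(ℝ) with compact support, then R_0(0) + R_{n-1}(0) + Σ_{i=0}^{n-2} |R_i(0) − R_{i+1}(0)| ≤ TV[ρ̄]. -/
open MeasureTheory

private lemma exists_ge_avg {a b : ℝ} (hab : a < b) {f : ℝ → ℝ}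
    (hint : IntegrableOn f (Set.Ioc a b)) {R : ℝ}
    (hRa : ∫ y in Set.Ioc a b, f y = R * (b - a)) :
    ∃ y ∈ Set.Ioc a b, R ≤ f y := by
  by_contra h
  push_neg at h
  have hμ : (volume (Set.Ioc a b)) = ENNReal.ofReal (b - a) := by
    simp [Real.volume_Ioc]
  have hconst : IntegrableOn (fun _ : ℝ => R) (Set.Ioc a b) := by
    refine integrableOn_const ?_
    rw [hμ]; exact ENNReal.ofReal_ne_top
  have hgint : IntegrableOn (fun y => R - f y) (Set.Ioc a b) := hconst.sub hint
  have hgpos : ∀ y ∈ Set.Ioc a b, 0 < R - f y := fun y hy => sub_pos.2 (h y hy)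
  have h0 : ∫ y in Set.Ioc a b, (R - f y) = 0 := by
    rw [integral_sub hconst hint, setIntegral_const, measureReal_def, hμ,
      ENNReal.toReal_ofReal (by linarith), hRa, smul_eq_mul]
    ring
  have hnn : 0 ≤ᵐ[volume.restrict (Set.Ioc a b)] fun y => R - f y := by
    filter_upwards [ae_restrict_mem measurableSet_Ioc] with y hy
    exact (hgpos y hy).le
  have hpos : (0:ℝ) < ∫ y in Set.Ioc a b, (R - f y) := by
    refine (setIntegral_pos_iff_support_of_nonneg_ae hnn hgint).2 ?_
    have hsub : Set.Ioc a b ⊆ Function.support (fun y => R - f y) ∩ Set.Ioc a b :=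
      fun y hy => ⟨ne_of_gt (hgpos y hy), hy⟩
    refine lt_of_lt_of_le ?_ (measure_mono hsub)
    rw [hμ]; exact ENNReal.ofReal_pos.2 (by linarith)
  rw [h0] at hpos
  exact lt_irrefl 0 hpos

private lemma exists_le_avg {a b : ℝ} (hab : a < b) {f : ℝ → ℝ}
    (hint : IntegrableOn f (Set.Ioc a b)) {R : ℝ}
    (hRa : ∫ y in Set.Ioc a b, f y = R * (b - a)) :
    ∃ y ∈ Set.Ioc a b, f y ≤ R := by
  have hint' : IntegrableOn (fun y => -f y) (Set.Ioc a b) := hint.neg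
  have hRa' : ∫ y in Set.Ioc a b, (-f y) = (-R) * (b - a) := by
    rw [integral_neg, hRa]; ring
  obtain ⟨y, hy1, hy2⟩ := exists_ge_avg hab hint' hRa'
  exact ⟨y, hy1, by linarith⟩

/-- The total variation of the discretized density at time zero is dominated by
the total variation of the initial datum. -/
theorem discrete_TV_le_TV_initial
    (n : ℕ) (hn : 2 ≤ n) (ℓ : ℝ) (hℓ : 0 < ℓ)
    (ρ : ℝ → ℝ) (hρ_nonneg : ∀ y, 0 ≤ ρ y)
    (hρ_bv : BoundedVariationOn ρ Set.univ)
    (hρ_supp : HasCompactSupport ρ)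
    (xb : ℕ → ℝ) (hxb_mono : ∀ i < n, xb i < xb (i + 1))
    (hmass : ∀ i < n, ∫ y in Set.Ioc (xb i) (xb (i + 1)), ρ y = ℓ)
    (R : ℕ → ℝ) (hR : ∀ i < n, R i = ℓ / (xb (i + 1) - xb i)) :
    R 0 + R (n - 1) + ∑ i ∈ Finset.range (n - 1), |R i - R (i + 1)|
      ≤ (eVariationOn ρ Set.univ).toReal := by
  obtain ⟨m, rfl⟩ : ∃ m, n = m + 1 := ⟨n - 1, by omega⟩
  have hm : 1 ≤ m := by omega
  simp only [Nat.add_sub_cancel]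
  have hΔ : ∀ i < m+1, 0 < xb (i+1) - xb i := fun i hi => sub_pos.2 (hxb_mono i hi)
  have hint : ∀ i < m+1, IntegrableOn ρ (Set.Ioc (xb i) (xb (i+1))) := by
    intro i hi
    by_contra hni
    have := hmass i hi
    rw [integral_undef hni] at this
    linarith
  have hmass' : ∀ i < m+1, ∫ y in Set.Ioc (xb i) (xb (i+1)), ρ y
      = R i * (xb (i+1) - xb i) := by
    intro i hi
    rw [hmass i hi, hR i hi, div_mul_cancel₀]
    exact (hΔ i hi).ne'
  -- signs
  set ε : ℕ → ℝ := fun i => if R (i+1) ≤ R i then 1 else -1 with hε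
  have hεabs : ∀ i, ε i * (R i - R (i+1)) = |R i - R (i+1)| := by
    intro i; by_cases h : R (i+1) ≤ R i
    · rw [abs_of_nonneg (by linarith)]; simp [hε, h]
    · push_neg at h
      rw [abs_of_neg (by linarith)]; simp [hε, not_le.2 h]
  have hεle : ∀ i (t : ℝ), ε i * t ≤ |t| := by
    intro i t
    by_cases h : R (i+1) ≤ R i
    · simp only [hε, if_pos h, one_mul]; exact le_abs_self t
    · simp only [hε, if_neg h, neg_one_mul]; exact neg_le_abs t
  -- coefficients
  set c : ℕ → ℝ := fun i =>
    (if i = 0 then 1 else 0) + (if i = m then 1 else 0)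
      + (if i < m then ε i else 0) - (if 0 < i then ε (i-1) else 0) with hc
  -- key rearrangement identity
  have hiden : ∀ v : ℕ → ℝ, ∑ i ∈ Finset.range (m+1), c i * v i
      = v 0 + v m + ∑ i ∈ Finset.range m, ε i * (v i - v (i+1)) := by
    intro v
    have hsplit : ∑ i ∈ Finset.range (m+1), c i * v i
        = (∑ i ∈ Finset.range (m+1), (if i = 0 then v i else 0))
          + (∑ i ∈ Finset.range (m+1), (if i = m then v i else 0))
          + (∑ i ∈ Finset.range (m+1), (if i < m then ε i * v i else 0))
          - (∑ i ∈ Finset.range (m+1), (if 0 < i then ε (i-1) * v i else 0)) := by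
      rw [← Finset.sum_add_distrib, ← Finset.sum_add_distrib, ← Finset.sum_sub_distrib]
      refine Finset.sum_congr rfl fun i _ => ?_
      simp only [hc]
      split_ifs <;> ring
    have hA : ∑ i ∈ Finset.range (m+1), (if i = 0 then v i else 0) = v 0 := by
      rw [Finset.sum_eq_single_of_mem 0 (Finset.mem_range.2 (by omega))]
      · simp
      · intro b _ hb; simp [hb]
    have hB : ∑ i ∈ Finset.range (m+1), (if i = m then v i else 0) = v m := by
      rw [Finset.sum_eq_single_of_mem m (Finset.mem_range.2 (by omega))]
      · simp
      · intro b _ hb; simp [hb]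
    have hC : ∑ i ∈ Finset.range (m+1), (if i < m then ε i * v i else 0)
        = ∑ i ∈ Finset.range m, ε i * v i := by
      rw [Finset.sum_range_succ, if_neg (lt_irrefl _), add_zero]
      exact Finset.sum_congr rfl fun i hi => if_pos (Finset.mem_range.1 hi)
    have hD : ∑ i ∈ Finset.range (m+1), (if 0 < i then ε (i-1) * v i else 0)
        = ∑ i ∈ Finset.range m, ε i * v (i+1) := by
      rw [Finset.sum_range_succ']
      have : ∀ i ∈ Finset.range m,
          (if 0 < i + 1 then ε (i+1-1) * v (i+1) else 0) = ε i * v (i+1) := by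
        intro i _
        rw [if_pos (Nat.succ_pos i), Nat.add_sub_cancel]
      rw [Finset.sum_congr rfl this, if_neg (lt_irrefl 0), add_zero]
    have hE : ∑ i ∈ Finset.range m, ε i * (v i - v (i+1))
        = (∑ i ∈ Finset.range m, ε i * v i)
          - ∑ i ∈ Finset.range m, ε i * v (i+1) := by
      rw [← Finset.sum_sub_distrib]
      exact Finset.sum_congr rfl fun i _ => by ring
    rw [hsplit, hA, hB, hC, hD, hE]
    ring
  -- choose points
  have hych : ∀ i, ∃ z, i < m+1 → z ∈ Set.Ioc (xb i) (xb (i+1)) ∧ c i * R i ≤ c i * ρ z := by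
    intro i
    by_cases hi : i < m+1
    · rcases le_or_gt 0 (c i) with hci | hci
      · obtain ⟨z, hz1, hz2⟩ := exists_ge_avg (hxb_mono i hi) (hint i hi) (hmass' i hi)
        exact ⟨z, fun _ => ⟨hz1, mul_le_mul_of_nonneg_left hz2 hci⟩⟩
      · obtain ⟨z, hz1, hz2⟩ := exists_le_avg (hxb_mono i hi) (hint i hi) (hmass' i hi)
        exact ⟨z, fun _ => ⟨hz1, mul_le_mul_of_nonpos_left hz2 hci.le⟩⟩
    · exact ⟨0, fun h => absurd h hi⟩
  choose y hy using hych
  -- support bound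
  obtain ⟨M, hM⟩ := (hρ_supp.isBounded).subset_closedBall 0
  set u : ℝ := min (xb 0) (-(M+1)) with hu
  set v : ℝ := max (xb (m+1)) (M+1) with hv
  have hρu : ρ u = 0 := by
    apply image_eq_zero_of_notMem_tsupport
    intro hmem
    have := hM hmem
    rw [Metric.mem_closedBall, Real.dist_eq, sub_zero] at this
    have h1 : u ≤ -(M+1) := min_le_right _ _
    have h2 : M + 1 ≤ -u := by linarith
    have h3 : -u ≤ |u| := neg_le_abs u
    linarith
  have hρv : ρ v = 0 := by
    apply image_eq_zero_of_notMem_tsupport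
    intro hmem
    have := hM hmem
    rw [Metric.mem_closedBall, Real.dist_eq, sub_zero] at this
    have h1 : M + 1 ≤ v := le_max_right _ _
    have h3 : v ≤ |v| := le_abs_self v
    linarith
  -- monotone sequence
  set w : ℕ → ℝ := fun j => if j = 0 then u else if j ≤ m+1 then y (j-1) else v with hw
  have hw0 : w 0 = u := by simp [hw]
  have hwy : ∀ j, j < m+1 → w (j+1) = y j := by
    intro j hj
    simp only [hw]
    rw [if_neg (Nat.succ_ne_zero j), if_pos (by omega), Nat.add_sub_cancel]
  have hwv : ∀ j, m+1 < j → w j = v := by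
    intro j hj
    simp only [hw]
    rw [if_neg (by omega), if_neg (by omega)]
  have hwmono : Monotone w := by
    apply monotone_nat_of_le_succ
    intro j
    rcases Nat.eq_zero_or_pos j with h0 | h0
    · subst h0
      rw [hw0, hwy 0 (by omega)]
      exact le_trans (min_le_left _ _) (le_of_lt (hy 0 (by omega)).1.1)
    · obtain ⟨k, rfl⟩ : ∃ k, j = k + 1 := ⟨j - 1, by omega⟩
      by_cases hk : k + 1 < m + 1
      · rw [hwy k (by omega), hwy (k+1) hk]
        have ha := (hy k (by omega)).1
        have hb := (hy (k+1) hk).1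
        calc y k ≤ xb (k+1) := ha.2
          _ ≤ y (k+1) := le_of_lt hb.1
      · by_cases hk2 : k + 1 = m + 1
        · rw [hwy k (by omega), hwv (k+2) (by omega)]
          calc y k ≤ xb (k+1) := (hy k (by omega)).1.2
            _ ≤ v := by rw [hk2]; exact le_max_left _ _
        · rw [hwv (k+1) (by omega), hwv (k+2) (by omega)]
  -- the variation sum is bounded by the total variation
  have hsum_le : ∑ j ∈ Finset.range (m+2), |ρ (w (j+1)) - ρ (w j)|
      ≤ (eVariationOn ρ Set.univ).toReal := by
    have h1 := eVariationOn.sum_le (f := ρ) (n := m+2) hwmono (fun i => Set.mem_univ (w i))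
    have h2 : ∑ j ∈ Finset.range (m+2), edist (ρ (w (j+1))) (ρ (w j))
        = ENNReal.ofReal (∑ j ∈ Finset.range (m+2), |ρ (w (j+1)) - ρ (w j)|) := by
      rw [ENNReal.ofReal_sum_of_nonneg (fun _ _ => abs_nonneg _)]
      exact Finset.sum_congr rfl fun j _ => by rw [edist_dist, Real.dist_eq]
    rw [h2] at h1
    exact (ENNReal.ofReal_le_iff_le_toReal hρ_bv).1 h1
  -- compute the variation sum
  have hsum_eq : ∑ j ∈ Finset.range (m+2), |ρ (w (j+1)) - ρ (w j)|
      = ρ (y 0) + ρ (y m) + ∑ k ∈ Finset.range m, |ρ (y k) - ρ (y (k+1))| := by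
    rw [Finset.sum_range_succ]
    have hlast : |ρ (w (m+1+1)) - ρ (w (m+1))| = ρ (y m) := by
      rw [hwv (m+2) (by omega), hρv, hwy m (by omega),
        abs_sub_comm, sub_zero, abs_of_nonneg (hρ_nonneg _)]
    rw [hlast, Finset.sum_range_succ']
    have hfirst : |ρ (w (0+1)) - ρ (w 0)| = ρ (y 0) := by
      rw [hw0, hρu, hwy 0 (by omega), sub_zero, abs_of_nonneg (hρ_nonneg _)]
    rw [hfirst]
    have hmid : ∀ k ∈ Finset.range m,
        |ρ (w (k+1+1)) - ρ (w (k+1))| = |ρ (y k) - ρ (y (k+1))| := by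
      intro k hk
      have hk' := Finset.mem_range.1 hk
      rw [hwy (k+1) (by omega), hwy k (by omega), abs_sub_comm]
    rw [Finset.sum_congr rfl hmid]
    ring
  -- chain of inequalities
  have hstep1 : R 0 + R m + ∑ i ∈ Finset.range m, |R i - R (i+1)|
      = ∑ i ∈ Finset.range (m+1), c i * R i := by
    rw [hiden R]
    congr 1
    exact (Finset.sum_congr rfl fun i _ => hεabs i).symm
  have hstep2 : ∑ i ∈ Finset.range (m+1), c i * R i
      ≤ ∑ i ∈ Finset.range (m+1), c i * ρ (y i) :=
    Finset.sum_le_sum fun i hi => (hy i (Finset.mem_range.1 hi)).2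
  have hstep3 : ∑ i ∈ Finset.range (m+1), c i * ρ (y i)
      = ρ (y 0) + ρ (y m) + ∑ i ∈ Finset.range m, ε i * (ρ (y i) - ρ (y (i+1))) :=
    hiden (fun i => ρ (y i))
  have hstep4 : ∑ i ∈ Finset.range m, ε i * (ρ (y i) - ρ (y (i+1)))
      ≤ ∑ i ∈ Finset.range m, |ρ (y i) - ρ (y (i+1))| :=
    Finset.sum_le_sum fun i _ => hεle i _
  calc R 0 + R m + ∑ i ∈ Finset.range m, |R i - R (i+1)|
      = ∑ i ∈ Finset.range (m+1), c i * R i := hstep1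
    _ ≤ ∑ i ∈ Finset.range (m+1), c i * ρ (y i) := hstep2
    _ = ρ (y 0) + ρ (y m) + ∑ i ∈ Finset.range m, ε i * (ρ (y i) - ρ (y (i+1))) := hstep3
    _ ≤ ρ (y 0) + ρ (y m) + ∑ i ∈ Finset.range m, |ρ (y i) - ρ (y (i+1))| := by
        linarith [hstep4]
    _ = ∑ j ∈ Finset.range (m+2), |ρ (w (j+1)) - ρ (w j)| := hsum_eq.symm
    _ ≤ (eVariationOn ρ Set.univ).toReal := hsum_le
end

section
/- Let v : [0,∞) → [0,∞) be non-increasing and Lipschitz with v(0) = v_max, φ ∈ W^{2,∞}(ℝ) with φ ≥ 0, and let x_{n-1}, x_n be C¹ functions with x_{n-1}(t) < x_n(t), ẋ_n(t) = v_max·φ(x_n(t)) and ẋ_{n-1}(t) = v(R_{n-1}(t))·φ(x_{n-1}(t)) where R_{n-1}(t) = ℓ/(x_n(t)−x_{n-1}(t)) for some ℓ > 0. Then for all t ≥ 0, x_n(t) − x_{n-1}(t) ≥ (x_n(0) − x_{n-1}(0))·e^{−v_max‖φ'‖_∞ t}. -/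
/-- Leader-pair discrete maximum principle (case P1): the gap between the leader
and the second particle decays at most exponentially. -/
theorem leader_pair_maximum_principle
    (v : ℝ → ℝ) (K : NNReal) (hv_lip : LipschitzWith K v)
    (hv_mono : AntitoneOn v (Set.Ici 0))
    (hv_nonneg : ∀ ρ : ℝ, 0 ≤ ρ → 0 ≤ v ρ)
    (φ φ' : ℝ → ℝ) (M : ℝ)
    (hφ_deriv : ∀ y : ℝ, HasDerivAt φ (φ' y) y)
    (hφ'_bdd : ∀ y : ℝ, |φ' y| ≤ M)
    (hφ_nonneg : ∀ y : ℝ, 0 ≤ φ y)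
    (ℓ : ℝ) (hℓ : 0 < ℓ)
    (xm xn : ℝ → ℝ)
    (hgap : ∀ t : ℝ, 0 ≤ t → xm t < xn t)
    (hxn : ∀ t : ℝ, 0 ≤ t → HasDerivAt xn (v 0 * φ (xn t)) t)
    (hxm : ∀ t : ℝ, 0 ≤ t →
      HasDerivAt xm (v (ℓ / (xn t - xm t)) * φ (xm t)) t) :
    ∀ t : ℝ, 0 ≤ t →
      xn t - xm t ≥ (xn 0 - xm 0) * Real.exp (-(v 0 * M) * t) := by
  intro t ht
  have hv0 : 0 ≤ v 0 := hv_nonneg 0 le_rfl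
  have hM : 0 ≤ M := le_trans (abs_nonneg _) (hφ'_bdd 0)
  set C : ℝ := v 0 * M with hC
  have hC0 : 0 ≤ C := mul_nonneg hv0 hM
  -- the auxiliary function h s = (xn s - xm s) * exp (C s)
  set h : ℝ → ℝ := fun s => (xn s - xm s) * Real.exp (C * s) with hh
  have hderiv : ∀ s ∈ Set.Ici (0:ℝ), HasDerivAt h
      (((v 0 * φ (xn s) - v (ℓ / (xn s - xm s)) * φ (xm s)) + C * (xn s - xm s))
        * Real.exp (C * s)) s := by
    intro s hs
    have h1 : HasDerivAt (fun u => xn u - xm u)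
        (v 0 * φ (xn s) - v (ℓ / (xn s - xm s)) * φ (xm s)) s :=
      (hxn s hs).sub (hxm s hs)
    have h2 : HasDerivAt (fun u => Real.exp (C * u)) (Real.exp (C * s) * C) s := by
      simpa [Function.comp_def] using (Real.hasDerivAt_exp (C * s)).comp s
        ((hasDerivAt_id s).const_mul C)
    have := h1.mul h2
    exact this.congr_deriv (by ring)
  have hderiv_nonneg : ∀ s ∈ Set.Ici (0:ℝ),
      0 ≤ ((v 0 * φ (xn s) - v (ℓ / (xn s - xm s)) * φ (xm s)) + C * (xn s - xm s))
        * Real.exp (C * s) := by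
    intro s hs
    have hg : 0 < xn s - xm s := sub_pos.2 (hgap s hs)
    have hR : (0:ℝ) ≤ ℓ / (xn s - xm s) := le_of_lt (div_pos hℓ hg)
    have hvR : v (ℓ / (xn s - xm s)) ≤ v 0 := hv_mono (Set.mem_Ici.2 le_rfl) (Set.mem_Ici.2 hR) hR
    -- MVT for φ on [xm s, xn s]
    obtain ⟨ξ, _, hξ⟩ := exists_hasDerivAt_eq_slope φ φ' (hgap s hs)
      (fun x _ => (hφ_deriv x).continuousAt.continuousWithinAt)
      (fun x _ => hφ_deriv x)
    have hslope : φ (xn s) - φ (xm s) = φ' ξ * (xn s - xm s) := by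
      field_simp at hξ
      linarith [hξ]
    have hlow : -M * (xn s - xm s) ≤ φ (xn s) - φ (xm s) := by
      rw [hslope]
      have : -M ≤ φ' ξ := neg_le_of_abs_le (hφ'_bdd ξ)
      nlinarith
    have hterm : v (ℓ / (xn s - xm s)) * φ (xm s) ≤ v 0 * φ (xm s) :=
      mul_le_mul_of_nonneg_right hvR (hφ_nonneg _)
    have : 0 ≤ (v 0 * φ (xn s) - v (ℓ / (xn s - xm s)) * φ (xm s)) + C * (xn s - xm s) := by
      have := mul_le_mul_of_nonneg_left hlow hv0
      nlinarith
    exact mul_nonneg this (Real.exp_pos _).le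
  have hmono : MonotoneOn h (Set.Ici (0:ℝ)) := by
    apply monotoneOn_of_hasDerivWithinAt_nonneg (convex_Ici 0)
      (fun s hs => ((hderiv s hs).continuousAt).continuousWithinAt)
    · intro s hs
      exact ((hderiv s (interior_subset hs)).hasDerivWithinAt)
    · intro s hs
      exact hderiv_nonneg s (interior_subset hs)
  have hkey : h 0 ≤ h t := hmono (by simp) (by exact ht) ht
  have h0 : h 0 = xn 0 - xm 0 := by simp [hh]
  rw [h0] at hkey
  have hexp : (0:ℝ) < Real.exp (C * t) := Real.exp_pos _
  have : (xn 0 - xm 0) * Real.exp (-(C) * t) ≤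
      ((xn t - xm t) * Real.exp (C * t)) * Real.exp (-(C) * t) :=
    mul_le_mul_of_nonneg_right hkey (Real.exp_pos _).le
  calc (xn 0 - xm 0) * Real.exp (-(v 0 * M) * t)
      ≤ ((xn t - xm t) * Real.exp (C * t)) * Real.exp (-(C) * t) := this
    _ = xn t - xm t := by
        rw [mul_assoc, ← Real.exp_add]
        ring_nf
        simp
end

section
/- Let μ and ν be the piecewise-constant probability densities on ℝ given by μ = Σ_{i=0}^{n-1} R_i·1_{[x_i,x_{i+1})} and ν = Σ_{i=0}^{n-1} S_i·1_{[y_i,y_{i+1})}, with R_i = ℓ_n/(x_{i+1}−x_i), S_i = ℓ_n/(y_{i+1}−y_i), ℓ_n = 1/n, and x_0<…<x_n, y_0<…<y_n. Then the pseudo-inverse of the CDF of μ is X_μ(z) = Σ_{i=0}^{n-1} [x_i + (z − iℓ_n)/R_i]·1_{[iℓ_n,(i+1)ℓ_n)}(z), and W_1(μ,ν) = ‖X_μ − X_ν‖_{L^1([0,1])} ≤ ℓ_n Σ_{i=0}^{n-1} |x_i − y_i| + (ℓ_n²/2) Σ_{i=0}^{n-1} |R_i^{-1} − S_i^{-1}|.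 -/
open MeasureTheory

/-- Cumulative distribution function of a density on `ℝ`. -/
noncomputable def densCdf (μ : ℝ → ℝ) (a : ℝ) : ℝ := ∫ t in Set.Iic a, μ t

/-- Pseudo-inverse of the CDF of a density on `ℝ`. -/
noncomputable def pseudoInv (μ : ℝ → ℝ) (z : ℝ) : ℝ := sInf {a : ℝ | z < densCdf μ a}

lemma aux_vol (a b c : ℝ) : volume (Set.Ico b c ∩ Set.Iic a) = ENNReal.ofReal (min c a - b) := by
  rcases le_or_gt c a with h | h
  · have he : Set.Ico b c ∩ Set.Iic a = Set.Ico b c := by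
      apply Set.inter_eq_left.2
      intro t ht
      exact le_trans ht.2.le h
    rw [he, Real.volume_Ico, min_eq_left h]
  · have he : Set.Ico b c ∩ Set.Iic a = Set.Icc b a := by
      ext t
      simp only [Set.mem_inter_iff, Set.mem_Ico, Set.mem_Iic, Set.mem_Icc]
      exact ⟨fun ht => ⟨ht.1.1, ht.2⟩, fun ht => ⟨⟨ht.1, lt_of_le_of_lt ht.2 h⟩, ht.2⟩⟩
    rw [he, Real.volume_Icc, min_eq_right h.le]

lemma aux_integrable (b c r : ℝ) : Integrable ((Set.Ico b c).indicator (fun _ => r)) volume := by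
  rw [integrable_indicator_iff measurableSet_Ico]
  exact integrableOn_const (by rw [Real.volume_Ico]; exact ENNReal.ofReal_ne_top)

lemma aux_setInt (a b c r : ℝ) :
    ∫ t in Set.Iic a, (Set.Ico b c).indicator (fun _ => r) t = max (min c a - b) 0 * r := by
  rw [setIntegral_indicator measurableSet_Ico, setIntegral_const, Set.inter_comm, measureReal_def, aux_vol,
    ENNReal.toReal_ofReal', smul_eq_mul]

lemma core_cdf (n : ℕ) (ℓ : ℝ) (x R : ℕ → ℝ) (μ : ℝ → ℝ)
    (hμ : ∀ t : ℝ, μ t = ∑ i ∈ Finset.range n, if x i ≤ t ∧ t < x (i + 1) then R i else 0)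
    (a : ℝ) :
    densCdf μ a = ∑ i ∈ Finset.range n, max (min (x (i + 1)) a - x i) 0 * R i := by
  have hind : ∀ i, (fun t => if x i ≤ t ∧ t < x (i + 1) then R i else 0)
      = (Set.Ico (x i) (x (i + 1))).indicator (fun _ => R i) := by
    intro i; funext t; simp [Set.indicator_apply, Set.mem_Ico]
  have hfun : μ = fun t => ∑ i ∈ Finset.range n,
      (Set.Ico (x i) (x (i + 1))).indicator (fun _ => R i) t := by
    funext t; rw [hμ t]
    exact Finset.sum_congr rfl fun i _ => by rw [← hind i]
  rw [densCdf, hfun, integral_finset_sum _ (fun i _ => (aux_integrable _ _ _).integrableOn)]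
  exact Finset.sum_congr rfl fun i _ => aux_setInt a _ _ _

lemma core_pinv (n : ℕ) (hn : 0 < n) (ℓ : ℝ) (hℓ : ℓ = 1 / n) (x R : ℕ → ℝ)
    (hx : ∀ i < n, x i < x (i + 1)) (hR : ∀ i < n, R i = ℓ / (x (i + 1) - x i))
    (μ : ℝ → ℝ)
    (hμ : ∀ t : ℝ, μ t = ∑ i ∈ Finset.range n, if x i ≤ t ∧ t < x (i + 1) then R i else 0)
    (k : ℕ) (hk : k < n) (z : ℝ) (hz1 : (k : ℝ) * ℓ ≤ z) (hz2 : z < ((k : ℝ) + 1) * ℓ) :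
    pseudoInv μ z = x k + (z - (k : ℝ) * ℓ) * (R k)⁻¹ := by
  have hn' : (0 : ℝ) < n := Nat.cast_pos.2 hn
  have hℓpos : 0 < ℓ := by rw [hℓ]; positivity
  have hdx : ∀ i < n, 0 < x (i + 1) - x i := fun i hi => sub_pos.2 (hx i hi)
  have hRpos : ∀ i < n, 0 < R i := fun i hi => by
    rw [hR i hi]; exact div_pos hℓpos (hdx i hi)
  have hxle : ∀ j ≤ n, ∀ i ≤ j, x i ≤ x j := by
    intro j
    induction j with
    | zero => intro _ i hi; simp [Nat.le_zero.1 hi]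
    | succ m ih =>
      intro hm i hi
      rcases Nat.eq_or_lt_of_le hi with h | h
      · exact h ▸ le_rfl
      · exact le_trans (ih (by omega) i (by omega)) (hx m (by omega)).le
  have hF : ∀ a : ℝ, ∀ k' < n, x k' ≤ a → a ≤ x (k' + 1) →
      densCdf μ a = (k' : ℝ) * ℓ + (a - x k') * R k' := by
    intro a k' hk' ha1 ha2
    rw [core_cdf n ℓ x R μ hμ a]
    have hterm : ∀ i ∈ Finset.range n,
        max (min (x (i + 1)) a - x i) 0 * R i =
          if i < k' then ℓ else if i = k' then (a - x k') * R k' else 0 := by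
      intro i hi
      rw [Finset.mem_range] at hi
      rcases lt_trichotomy i k' with h | h | h
      · rw [if_pos h]
        have h1 : x (i + 1) ≤ a := le_trans (hxle k' hk'.le (i + 1) h) ha1
        rw [min_eq_left h1, max_eq_left (sub_nonneg.2 (hx i hi).le), hR i hi]
        rw [mul_comm, div_mul_cancel₀ _ (hdx i hi).ne']
      · rw [if_neg (by omega)]
        subst h
        rw [if_pos rfl, min_eq_right ha2, max_eq_left (sub_nonneg.2 ha1)]
      · rw [if_neg (by omega), if_neg (by omega)]
        have h1 : a ≤ x i := le_trans ha2 (hxle i hi.le (k' + 1) h)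
        have : min (x (i + 1)) a - x i ≤ 0 := by
          have := min_le_right (x (i + 1)) a
          linarith
        rw [max_eq_right this, zero_mul]
    rw [Finset.sum_congr rfl hterm,
      ← Finset.sum_range_add_sum_Ico _ (Nat.succ_le_of_lt hk'), Finset.sum_range_succ]
    have h1 : ∑ i ∈ Finset.range k', (if i < k' then ℓ else if i = k' then (a - x k') * R k' else 0)
        = (k' : ℝ) * ℓ := by
      rw [Finset.sum_congr rfl (fun i hi => if_pos (Finset.mem_range.1 hi))]
      simp [mul_comm]
    have h2 : ∑ i ∈ Finset.Ico (k' + 1) n,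
        (if i < k' then ℓ else if i = k' then (a - x k') * R k' else 0) = 0 := by
      apply Finset.sum_eq_zero
      intro i hi
      rw [Finset.mem_Ico] at hi
      rw [if_neg (by omega), if_neg (by omega)]
    rw [h1, h2, if_neg (lt_irrefl k'), if_pos rfl, add_zero]
  have hmono : Monotone (densCdf μ) := by
    intro a b hab
    rw [core_cdf n ℓ x R μ hμ, core_cdf n ℓ x R μ hμ]
    apply Finset.sum_le_sum
    intro i hi
    apply mul_le_mul_of_nonneg_right _ (hRpos i (Finset.mem_range.1 hi)).le
    exact max_le_max (sub_le_sub_right (min_le_min le_rfl hab) _) le_rfl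
  set a₀ : ℝ := x k + (z - (k : ℝ) * ℓ) * (R k)⁻¹ with ha₀
  have hzk : 0 ≤ z - (k : ℝ) * ℓ := sub_nonneg.2 hz1
  have hzk2 : z - (k : ℝ) * ℓ < ℓ := by linarith [hz2]
  have hRk := hRpos k hk
  have ha₀1 : x k ≤ a₀ := by
    rw [ha₀]; nlinarith [inv_pos.2 hRk]
  have hRinv : ℓ * (R k)⁻¹ = x (k + 1) - x k := by
    rw [hR k hk, inv_div, mul_comm, div_mul_cancel₀ _ hℓpos.ne']
  have ha₀2 : a₀ < x (k + 1) := by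
    have : (z - (k : ℝ) * ℓ) * (R k)⁻¹ < ℓ * (R k)⁻¹ :=
      mul_lt_mul_of_pos_right hzk2 (inv_pos.2 hRk)
    rw [hRinv] at this
    rw [ha₀]; linarith
  have hFa₀ : densCdf μ a₀ = z := by
    rw [hF a₀ k hk ha₀1 ha₀2.le]
    have : (a₀ - x k) * R k = z - (k : ℝ) * ℓ := by
      rw [ha₀]; field_simp; ring
    rw [this]; ring
  have hset : {a : ℝ | z < densCdf μ a} = Set.Ioi a₀ := by
    ext a
    simp only [Set.mem_setOf_eq, Set.mem_Ioi]
    constructor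
    · intro h
      by_contra hc
      push_neg at hc
      exact absurd (lt_of_lt_of_le h (hFa₀ ▸ hmono hc)) (lt_irrefl z)
    · intro h
      rcases le_or_gt a (x (k + 1)) with h2 | h2
      · rw [hF a k hk (le_trans ha₀1 h.le) h2]
        rw [hF a₀ k hk ha₀1 ha₀2.le] at hFa₀
        nlinarith
      · have : densCdf μ (x (k + 1)) ≤ densCdf μ a := hmono h2.le
        rw [hF (x (k + 1)) k hk (hx k hk).le le_rfl, ← hRinv] at this
        have h3 : (ℓ * (R k)⁻¹) * R k = ℓ := by field_simp
        nlinarith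
  rw [pseudoInv, hset, csInf_Ioi]

lemma abs_affine_integral (a b c d : ℝ) (hab : a ≤ b) :
    ∫ z in a..b, |c + (z - a) * d| ≤ |c| * (b - a) + |d| * ((b - a) ^ 2 / 2) := by
  have hcont : Continuous fun z : ℝ => |c + (z - a) * d| := by continuity
  have hcont2 : Continuous fun z : ℝ => |c| + (z - a) * |d| := by continuity
  have step1 : ∫ z in a..b, |c + (z - a) * d| ≤ ∫ z in a..b, (|c| + (z - a) * |d|) := by
    apply intervalIntegral.integral_mono_on hab (hcont.intervalIntegrable _ _)
      (hcont2.intervalIntegrable _ _)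
    intro z hz
    calc |c + (z - a) * d| ≤ |c| + |(z - a) * d| := abs_add_le _ _
      _ = |c| + (z - a) * |d| := by rw [abs_mul, abs_of_nonneg (sub_nonneg.2 hz.1)]
  have h1 : (∫ z in a..b, (z - a)) = (b - a) ^ 2 / 2 := by
    rw [intervalIntegral.integral_sub intervalIntegral.intervalIntegrable_id
        (intervalIntegrable_const), _root_.integral_id,
      intervalIntegral.integral_const]
    simp only [smul_eq_mul]
    ring
  have step2 : (∫ z in a..b, (|c| + (z - a) * |d|)) =
      |c| * (b - a) + |d| * ((b - a) ^ 2 / 2) := by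
    rw [intervalIntegral.integral_add intervalIntegrable_const
        (((by continuity : Continuous fun z : ℝ => (z - a) * |d|)).intervalIntegrable _ _),
      intervalIntegral.integral_const, intervalIntegral.integral_mul_const, h1]
    simp only [smul_eq_mul]
    ring
  rw [← step2] at *
  exact step1


/-- Explicit formula for the pseudo-inverse of a piecewise-constant density, and
the resulting bound on the 1-Wasserstein distance (the `L¹([0,1])` distance of
the pseudo-inverses) between two such densities. -/
theorem pseudoInv_piecewise_and_W1_bound
    (n : ℕ) (hn : 0 < n) (ℓ : ℝ) (hℓ : ℓ = 1 / n)
    (x y : ℕ → ℝ)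
    (hx_mono : ∀ i < n, x i < x (i + 1)) (hy_mono : ∀ i < n, y i < y (i + 1))
    (R S : ℕ → ℝ)
    (hR : ∀ i < n, R i = ℓ / (x (i + 1) - x i))
    (hS : ∀ i < n, S i = ℓ / (y (i + 1) - y i))
    (μ ν : ℝ → ℝ)
    (hμ : ∀ t : ℝ, μ t = ∑ i ∈ Finset.range n,
      if x i ≤ t ∧ t < x (i + 1) then R i else 0)
    (hν : ∀ t : ℝ, ν t = ∑ i ∈ Finset.range n,
      if y i ≤ t ∧ t < y (i + 1) then S i else 0) :
    (∀ z ∈ Set.Ico (0 : ℝ) 1, pseudoInv μ z = ∑ i ∈ Finset.range n,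
      if (i : ℝ) * ℓ ≤ z ∧ z < ((i : ℝ) + 1) * ℓ
        then x i + (z - (i : ℝ) * ℓ) * (R i)⁻¹ else 0) ∧
    ∫ z in (0 : ℝ)..1, |pseudoInv μ z - pseudoInv ν z| ≤
      ℓ * ∑ i ∈ Finset.range n, |x i - y i| +
        ℓ ^ 2 / 2 * ∑ i ∈ Finset.range n, |(R i)⁻¹ - (S i)⁻¹| := by

  have hn' : (0 : ℝ) < n := Nat.cast_pos.2 hn
  have hℓpos : 0 < ℓ := by rw [hℓ]; positivity
  have hloc : ∀ z ∈ Set.Ico (0 : ℝ) 1, ∃ k < n, (k : ℝ) * ℓ ≤ z ∧ z < ((k : ℝ) + 1) * ℓ := by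
    intro z hz
    refine ⟨⌊z * n⌋₊, ?_, ?_, ?_⟩
    · rw [Nat.floor_lt (mul_nonneg hz.1 hn'.le)]
      nlinarith [hz.2]
    · have h := Nat.floor_le (mul_nonneg hz.1 hn'.le)
      rw [hℓ, mul_one_div, div_le_iff₀ hn']
      exact h
    · have h := Nat.lt_floor_add_one (z * n)
      rw [hℓ, mul_one_div, lt_div_iff₀ hn']
      exact h
  have hkeyμ : ∀ k < n, ∀ z, (k : ℝ) * ℓ ≤ z → z < ((k : ℝ) + 1) * ℓ →
      pseudoInv μ z = x k + (z - (k : ℝ) * ℓ) * (R k)⁻¹ :=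
    fun k hk z h1 h2 => core_pinv n hn ℓ hℓ x R hx_mono hR μ hμ k hk z h1 h2
  have hkeyν : ∀ k < n, ∀ z, (k : ℝ) * ℓ ≤ z → z < ((k : ℝ) + 1) * ℓ →
      pseudoInv ν z = y k + (z - (k : ℝ) * ℓ) * (S k)⁻¹ :=
    fun k hk z h1 h2 => core_pinv n hn ℓ hℓ y S hy_mono hS ν hν k hk z h1 h2
  constructor
  · intro z hz
    obtain ⟨k, hk, h1, h2⟩ := hloc z hz
    rw [hkeyμ k hk z h1 h2,
      Finset.sum_eq_single_of_mem k (Finset.mem_range.2 hk)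
        (fun j _ hjk => by
          rw [if_neg]
          rintro ⟨hj1, hj2⟩
          rcases lt_or_gt_of_ne hjk with h | h
          · have hc : ((j : ℝ) + 1) ≤ (k : ℝ) := by exact_mod_cast h
            nlinarith
          · have hc : ((k : ℝ) + 1) ≤ (j : ℝ) := by exact_mod_cast h
            nlinarith),
      if_pos ⟨h1, h2⟩]
  · have hae : ∀ k < n, ∀ᵐ z ∂(volume : Measure ℝ),
        z ∈ Set.uIoc ((k : ℝ) * ℓ) (((k : ℝ) + 1) * ℓ) →
          |pseudoInv μ z - pseudoInv ν z| =
            |(x k - y k) + (z - (k : ℝ) * ℓ) * ((R k)⁻¹ - (S k)⁻¹)| := by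
      intro k hk
      have hone : ∀ᵐ z ∂(volume : Measure ℝ), z ≠ ((k : ℝ) + 1) * ℓ := by
        rw [ae_iff]
        simpa using measure_singleton (((k : ℝ) + 1) * ℓ)
      filter_upwards [hone] with z hz hzI
      rw [Set.uIoc_of_le (by nlinarith : (k : ℝ) * ℓ ≤ ((k : ℝ) + 1) * ℓ)] at hzI
      have h1 : (k : ℝ) * ℓ ≤ z := hzI.1.le
      have h2 : z < ((k : ℝ) + 1) * ℓ := lt_of_le_of_ne hzI.2 hz
      rw [hkeyμ k hk z h1 h2, hkeyν k hk z h1 h2]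
      ring_nf
    have hint : ∀ k < n, IntervalIntegrable
        (fun z => |pseudoInv μ z - pseudoInv ν z|) volume ((k : ℝ) * ℓ) (((k : ℝ) + 1) * ℓ) := by
      intro k hk
      have hc : Continuous fun z : ℝ =>
          |(x k - y k) + (z - (k : ℝ) * ℓ) * ((R k)⁻¹ - (S k)⁻¹)| := by continuity
      refine (hc.intervalIntegrable _ _).congr_ae ?_
      have h' := (ae_restrict_iff' measurableSet_uIoc).2 (hae k hk)
      exact (Filter.EventuallyEq.symm h')
    have hend : ∀ k : ℕ, (((k + 1 : ℕ) : ℝ)) * ℓ = ((k : ℝ) + 1) * ℓ := by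
      intro k; push_cast; ring
    have hsum := intervalIntegral.sum_integral_adjacent_intervals
      (f := fun z => |pseudoInv μ z - pseudoInv ν z|) (μ := volume)
      (a := fun k : ℕ => (k : ℝ) * ℓ) (n := n)
      (fun k hk => by
        have h := hint k hk
        rw [← hend k] at h
        exact h)
    have h01 : ∫ z in (0 : ℝ)..1, |pseudoInv μ z - pseudoInv ν z| =
        ∑ k ∈ Finset.range n, ∫ z in ((k : ℝ) * ℓ)..(((k : ℝ) + 1) * ℓ),
          |pseudoInv μ z - pseudoInv ν z| := by
      rw [Finset.sum_congr rfl (fun k _ => by rw [← hend k]), hsum]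
      norm_num
      rw [hℓ, mul_one_div, div_self hn'.ne']
    rw [h01]
    have hpiece : ∀ k ∈ Finset.range n,
        (∫ z in ((k : ℝ) * ℓ)..(((k : ℝ) + 1) * ℓ), |pseudoInv μ z - pseudoInv ν z|) ≤
          |x k - y k| * ℓ + |(R k)⁻¹ - (S k)⁻¹| * (ℓ ^ 2 / 2) := by
      intro k hk'
      have hk := Finset.mem_range.1 hk'
      rw [intervalIntegral.integral_congr_ae (hae k hk)]
      have hb := abs_affine_integral ((k : ℝ) * ℓ) (((k : ℝ) + 1) * ℓ)
        (x k - y k) ((R k)⁻¹ - (S k)⁻¹) (by nlinarith)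
      have he : ((k : ℝ) + 1) * ℓ - (k : ℝ) * ℓ = ℓ := by ring
      rw [he] at hb
      exact hb
    calc ∑ k ∈ Finset.range n, ∫ z in ((k : ℝ) * ℓ)..(((k : ℝ) + 1) * ℓ),
          |pseudoInv μ z - pseudoInv ν z|
        ≤ ∑ k ∈ Finset.range n, (|x k - y k| * ℓ + |(R k)⁻¹ - (S k)⁻¹| * (ℓ ^ 2 / 2)) :=
          Finset.sum_le_sum hpiece
      _ = ℓ * ∑ i ∈ Finset.range n, |x i - y i| +
          ℓ ^ 2 / 2 * ∑ i ∈ Finset.range n, |(R i)⁻¹ - (S i)⁻¹| := by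
          rw [Finset.sum_add_distrib, ← Finset.sum_mul, ← Finset.sum_mul,
            mul_comm, mul_comm (∑ i ∈ Finset.range n, |(R i)⁻¹ - (S i)⁻¹|)]
end

section
/- Let v : [0,∞) → [0,∞) satisfy v(ρ) = 0 for ρ ≥ R_max and v(ρ) > 0 for ρ < R_max. Let x, y : [0,T] → ℝ be C¹ with x(t) < y(t), ẏ(t) = v(R(t))·ψ₁(t) and ẋ(t) = v(Q(t))·ψ₂(t), where R(t) = ℓ/(z(t) − y(t)) ≥ 0 (for some z > y), Q(t) = ℓ/(y(t) − x(t)), ψ₁(t) ≥ 0 and ψ₂ arbitrary bounded continuous. If y(0) − x(0) ≥ ℓ/R_max, then y(t) − x(t) ≥ ℓ/R_max for all t ∈ [0,T]. -/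
/-- Key step of the discrete maximum principle in the attractive case (P4):
if `v` vanishes above `R_max`, the gap between two consecutive particles never
drops below `ℓ / R_max`. -/
theorem gap_lower_bound_P4
    (Rmax : ℝ) (hRmax : 0 < Rmax)
    (v : ℝ → ℝ)
    (hv_zero : ∀ ρ : ℝ, Rmax ≤ ρ → v ρ = 0)
    (hv_pos : ∀ ρ : ℝ, 0 ≤ ρ → ρ < Rmax → 0 < v ρ)
    (T ℓ : ℝ) (hT : 0 < T) (hℓ : 0 < ℓ)
    (x y z : ℝ → ℝ) (ψ₁ ψ₂ : ℝ → ℝ)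
    (hψ₁_cont : ContinuousOn ψ₁ (Set.Icc 0 T))
    (hψ₂_cont : ContinuousOn ψ₂ (Set.Icc 0 T))
    (hψ₁_nonneg : ∀ t ∈ Set.Icc (0 : ℝ) T, 0 ≤ ψ₁ t)
    (hψ₂_bdd : ∃ C : ℝ, ∀ t ∈ Set.Icc (0 : ℝ) T, |ψ₂ t| ≤ C)
    (hordered : ∀ t ∈ Set.Icc (0 : ℝ) T, x t < y t ∧ y t < z t)
    (hy : ∀ t ∈ Set.Icc (0 : ℝ) T, HasDerivAt y (v (ℓ / (z t - y t)) * ψ₁ t) t)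
    (hx : ∀ t ∈ Set.Icc (0 : ℝ) T, HasDerivAt x (v (ℓ / (y t - x t)) * ψ₂ t) t)
    (h0 : y 0 - x 0 ≥ ℓ / Rmax) :
    ∀ t ∈ Set.Icc (0 : ℝ) T, y t - x t ≥ ℓ / Rmax := by

  intro t₀ ht₀
  by_contra hcon
  push_neg at hcon
  set c := ℓ / Rmax with hc
  have hc0 : 0 < c := div_pos hℓ hRmax
  obtain ⟨ht₀0, ht₀T⟩ := ht₀
  have hsubI : Set.Icc (0:ℝ) t₀ ⊆ Set.Icc 0 T := Set.Icc_subset_Icc le_rfl ht₀T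
  have hg : ∀ t ∈ Set.Icc (0:ℝ) T, HasDerivAt (fun t => y t - x t)
      (v (ℓ / (z t - y t)) * ψ₁ t - v (ℓ / (y t - x t)) * ψ₂ t) t :=
    fun t ht => (hy t ht).sub (hx t ht)
  have hgc : ContinuousOn (fun t => y t - x t) (Set.Icc 0 t₀) :=
    fun t ht => ((hg t (hsubI ht)).continuousAt).continuousWithinAt
  set S := Set.Icc (0:ℝ) t₀ ∩ (fun t => y t - x t) ⁻¹' Set.Ici c with hS
  have hS0 : (0:ℝ) ∈ S := ⟨⟨le_rfl, ht₀0⟩, h0⟩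
  have hSne : S.Nonempty := ⟨0, hS0⟩
  have hSbdd : BddAbove S := ⟨t₀, fun t ht => ht.1.2⟩
  have hScl : IsClosed S :=
    hgc.preimage_isClosed_of_isClosed isClosed_Icc isClosed_Ici
  set s := sSup S with hs
  have hsS : s ∈ S := hScl.csSup_mem hSne hSbdd
  have hst₀ : s ≤ t₀ := hsS.1.2
  have hsne : s ≠ t₀ := by
    intro h
    have := hsS.2
    rw [h] at this
    exact absurd this (not_le.mpr hcon)
  have hslt : s < t₀ := lt_of_le_of_ne hst₀ hsne
  have hs0 : 0 ≤ s := hsS.1.1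
  -- derivative is nonnegative on (s, t₀)
  have hderiv : ∀ t ∈ interior (Set.Icc s t₀), 0 ≤ deriv (fun t => y t - x t) t := by
    intro t ht
    rw [interior_Icc] at ht
    have htT : t ∈ Set.Icc (0:ℝ) T :=
      ⟨le_trans hs0 ht.1.le, le_trans ht.2.le ht₀T⟩
    have hgt : y t - x t < c := by
      by_contra h
      push_neg at h
      have : t ∈ S := ⟨⟨le_trans hs0 ht.1.le, ht.2.le⟩, h⟩
      exact absurd (le_csSup hSbdd this) (not_le.mpr ht.1)
    have hxy := (hordered t htT).1
    have hgpos : 0 < y t - x t := sub_pos.mpr hxy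
    have hQ : Rmax ≤ ℓ / (y t - x t) := by
      rw [le_div_iff₀ hgpos]
      calc Rmax * (y t - x t) ≤ Rmax * c := by nlinarith
        _ = ℓ := by rw [hc, mul_div_cancel₀ _ (ne_of_gt hRmax)]
    have hvQ : v (ℓ / (y t - x t)) = 0 := hv_zero _ hQ
    have hR0 : 0 ≤ ℓ / (z t - y t) :=
      div_nonneg hℓ.le (sub_nonneg.mpr (hordered t htT).2.le)
    have hvR : 0 ≤ v (ℓ / (z t - y t)) := by
      rcases lt_or_ge (ℓ / (z t - y t)) Rmax with h | h
      · exact (hv_pos _ hR0 h).le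
      · exact le_of_eq (hv_zero _ h).symm
    rw [(hg t htT).deriv, hvQ]
    have := hψ₁_nonneg t htT
    nlinarith
  have hmono : MonotoneOn (fun t => y t - x t) (Set.Icc s t₀) := by
    apply monotoneOn_of_deriv_nonneg (convex_Icc s t₀)
    · exact hgc.mono (Set.Icc_subset_Icc hs0 le_rfl)
    · intro t ht
      rw [interior_Icc] at ht
      have htT : t ∈ Set.Icc (0:ℝ) T :=
        ⟨le_trans hs0 ht.1.le, le_trans ht.2.le ht₀T⟩
      exact ((hg t htT).differentiableAt).differentiableWithinAt
    · exact hderiv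
  have : y s - x s ≤ y t₀ - x t₀ :=
    hmono ⟨le_rfl, hst₀⟩ ⟨hst₀, le_rfl⟩ hst₀
  have := hsS.2
  simp only [Set.mem_preimage, Set.mem_Ici] at this
  linarith [hsS.2]
end

section
/- Let u : [0,1] → ℝ be the pseudo-inverse X_μ of the CDF of a compactly supported probability density μ on ℝ, and similarly X_ν for ν, both supported in a fixed interval I. Then ‖μ − ν‖_{L¹(ℝ)} ≤ C·(TV[μ] + TV[ν])^{1/2}·W_1(μ,ν)^{1/2} for a constant C depending only on I, where TV denotes total variation. -/
open MeasureTheory Set Filter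
open scoped ENNReal

set_option linter.unusedSectionVars false

section cdf
variable {a b : ℝ} {μ : ℝ → ℝ}

lemma densCdf_mono (hμ0 : ∀ t, 0 ≤ μ t) (hμi : Integrable μ) : Monotone (densCdf μ) := by
  intro x y hxy
  exact setIntegral_mono_set hμi.integrableOn
    (Eventually.of_forall hμ0) (HasSubset.Subset.eventuallyLE (Iic_subset_Iic.2 hxy))

lemma densCdf_nonneg (hμ0 : ∀ t, 0 ≤ μ t) (x : ℝ) : 0 ≤ densCdf μ x :=
  setIntegral_nonneg measurableSet_Iic fun t _ => hμ0 t

lemma densCdf_le_total (hμ0 : ∀ t, 0 ≤ μ t) (hμi : Integrable μ) (x : ℝ) :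
    densCdf μ x ≤ ∫ t, μ t :=
  setIntegral_le_integral hμi (Eventually.of_forall hμ0)

lemma densCdf_eq_zero (hsupp : Function.support μ ⊆ Set.Icc a b) {x : ℝ} (hx : x < a) :
    densCdf μ x = 0 := by
  have : EqOn μ 0 (Iic x) := by
    intro t ht
    by_contra h
    have h2 := (hsupp h).1
    exact absurd (lt_of_le_of_lt (le_trans h2 ht) hx) (lt_irrefl a)
  rw [densCdf, setIntegral_congr_fun measurableSet_Iic this]
  simp

lemma densCdf_eq_total (hμi : Integrable μ) (hsupp : Function.support μ ⊆ Set.Icc a b)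
    {x : ℝ} (hx : b ≤ x) : densCdf μ x = ∫ t, μ t := by
  have h1 : (∫ t in Iic x, μ t) + ∫ t in (Iic x)ᶜ, μ t = ∫ t, μ t :=
    integral_add_compl measurableSet_Iic hμi
  have h2 : ∫ t in (Iic x)ᶜ, μ t = 0 := by
    have : EqOn μ 0 (Iic x)ᶜ := by
      intro t ht
      by_contra h
      have h3 := (hsupp h).2
      simp only [mem_compl_iff, mem_Iic, not_le] at ht
      exact absurd (le_trans h3 hx) (not_le.2 ht)
    rw [setIntegral_congr_fun measurableSet_Iic.compl this]
    simp
  rw [densCdf, ← h1, h2, add_zero]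

variable (hμ0 : ∀ t, 0 ≤ μ t) (hμi : Integrable μ) (htot : (∫ t, μ t) = 1)
  (hsupp : Function.support μ ⊆ Set.Icc a b)

include hμ0 hsupp in
lemma cdfSet_subset_Ici {z : ℝ} (hz : 0 ≤ z) : {a' : ℝ | z < densCdf μ a'} ⊆ Ici a := by
  intro x hx
  simp only [mem_setOf_eq] at hx
  by_contra h
  rw [densCdf_eq_zero hsupp (not_le.1 h)] at hx
  exact absurd (lt_of_le_of_lt hz hx) (by simp)

include hμi htot hsupp in
lemma cdfSet_nonempty {z : ℝ} (hz : z < 1) : b ∈ {a' : ℝ | z < densCdf μ a'} := by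
  simp only [mem_setOf_eq, densCdf_eq_total hμi hsupp le_rfl, htot]
  exact hz

include hμ0 hsupp in
lemma pseudoInv_le {z x : ℝ} (hz : 0 ≤ z) (h : z < densCdf μ x) : pseudoInv μ z ≤ x :=
  csInf_le ⟨a, cdfSet_subset_Ici hμ0 hsupp hz⟩ h

include hμ0 hμi htot hsupp in
lemma le_pseudoInv {z x : ℝ} (hz : z < 1) (h : densCdf μ x ≤ z) : x ≤ pseudoInv μ z := by
  apply le_csInf ⟨b, cdfSet_nonempty hμi htot hsupp hz⟩
  intro y hy
  simp only [mem_setOf_eq] at hy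
  by_contra hxy
  exact absurd (lt_of_le_of_lt (le_trans (densCdf_mono hμ0 hμi (not_le.1 hxy).le) h) hy)
    (lt_irrefl _)

include hμ0 hμi htot hsupp in
lemma pseudoInv_mem {z : ℝ} (hz0 : 0 ≤ z) (hz1 : z < 1) : pseudoInv μ z ∈ Icc a b := by
  constructor
  · apply le_csInf ⟨b, cdfSet_nonempty hμi htot hsupp hz1⟩
    intro y hy
    exact cdfSet_subset_Ici hμ0 hsupp hz0 hy
  · apply csInf_le ⟨a, cdfSet_subset_Ici hμ0 hsupp hz0⟩
    exact cdfSet_nonempty hμi htot hsupp hz1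

end cdf

section step1
variable {a b : ℝ} {μ ν : ℝ → ℝ}

lemma w1_compare (hab : a < b)
    (hμ0 : ∀ t, 0 ≤ μ t) (hν0 : ∀ t, 0 ≤ ν t)
    (hμi : Integrable μ) (hνi : Integrable ν)
    (hμt : (∫ t, μ t) = 1) (hνt : (∫ t, ν t) = 1)
    (hμs : Function.support μ ⊆ Set.Icc a b) (hνs : Function.support ν ⊆ Set.Icc a b) :
    ∫⁻ x, ENNReal.ofReal |densCdf μ x - densCdf ν x| ≤
      ∫⁻ z in Ioo (0:ℝ) 1, ENNReal.ofReal |pseudoInv μ z - pseudoInv ν z| := by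
  set Fμ := densCdf μ with hFμ
  set Fν := densCdf ν with hFν
  have hmμ : Monotone Fμ := densCdf_mono hμ0 hμi
  have hmν : Monotone Fν := densCdf_mono hν0 hνi
  set S : Set (ℝ × ℝ) :=
    {p : ℝ × ℝ | min (Fμ p.1) (Fν p.1) ≤ p.2 ∧ p.2 < max (Fμ p.1) (Fν p.1)} with hSdef
  have hS : MeasurableSet S := by
    apply MeasurableSet.inter
    · exact measurableSet_le ((hmμ.measurable.comp measurable_fst).min
        (hmν.measurable.comp measurable_fst)) measurable_snd
    · exact measurableSet_lt measurable_snd ((hmμ.measurable.comp measurable_fst).max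
        (hmν.measurable.comp measurable_fst))
  have key : ∀ x : ℝ, ENNReal.ofReal |Fμ x - Fν x| = volume (Prod.mk x ⁻¹' S) := by
    intro x
    have : Prod.mk x ⁻¹' S = Ico (min (Fμ x) (Fν x)) (max (Fμ x) (Fν x)) := rfl
    rw [this, Real.volume_Ico, max_sub_min_eq_abs, abs_sub_comm]
  calc ∫⁻ x, ENNReal.ofReal |Fμ x - Fν x|
      = ∫⁻ x, volume (Prod.mk x ⁻¹' S) := by simp_rw [key]
    _ = (volume.prod volume) S := (Measure.prod_apply hS).symm
    _ = ∫⁻ z, volume ((fun x => (x, z)) ⁻¹' S) := Measure.prod_apply_symm hS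
    _ ≤ ∫⁻ z, (Ioo (0:ℝ) 1).indicator
          (fun z => ENNReal.ofReal |pseudoInv μ z - pseudoInv ν z|) z := by
        apply lintegral_mono_ae
        have h0 : ({(0:ℝ)} : Set ℝ)ᶜ ∈ ae (volume : Measure ℝ) := by
          rw [compl_mem_ae_iff]; exact Real.volume_singleton
        filter_upwards [h0] with z hz
        by_cases hz01 : z ∈ Ioo (0:ℝ) 1
        · rw [indicator_of_mem hz01]
          obtain ⟨hz0, hz1⟩ := hz01
          have hsub : (fun x => (x, z)) ⁻¹' S ⊆
              Icc (min (pseudoInv μ z) (pseudoInv ν z)) (max (pseudoInv μ z) (pseudoInv ν z)) := by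
            intro x hx
            obtain ⟨h1, h2⟩ := hx
            rcases le_total (Fμ x) (Fν x) with hc | hc
            · rw [min_eq_left hc] at h1
              rw [max_eq_right hc] at h2
              have hx1 : pseudoInv ν z ≤ x := pseudoInv_le hν0 hνs hz0.le h2
              have hx2 : x ≤ pseudoInv μ z := le_pseudoInv hμ0 hμi hμt hμs hz1 h1
              exact ⟨le_trans (min_le_right _ _) hx1, le_trans hx2 (le_max_left _ _)⟩
            · rw [min_eq_right hc] at h1
              rw [max_eq_left hc] at h2
              have hx1 : pseudoInv μ z ≤ x := pseudoInv_le hμ0 hμs hz0.le h2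
              have hx2 : x ≤ pseudoInv ν z := le_pseudoInv hν0 hνi hνt hνs hz1 h1
              exact ⟨le_trans (min_le_left _ _) hx1, le_trans hx2 (le_max_right _ _)⟩
          calc volume ((fun x => (x, z)) ⁻¹' S) ≤ volume (Icc (min (pseudoInv μ z) (pseudoInv ν z))
                (max (pseudoInv μ z) (pseudoInv ν z))) := measure_mono hsub
            _ = ENNReal.ofReal |pseudoInv μ z - pseudoInv ν z| := by
                rw [Real.volume_Icc, max_sub_min_eq_abs, abs_sub_comm]
        · rw [indicator_of_notMem hz01]
          have : (fun x => (x, z)) ⁻¹' S = ∅ := by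
            ext x
            simp only [mem_preimage, hSdef, mem_setOf_eq, mem_empty_iff_false, iff_false, not_and,
              not_lt]
            intro h1
            rcases not_and_or.mp (by rwa [mem_Ioo] at hz01) with h | h
            · -- ¬ 0 < z, and z ≠ 0, so z < 0
              exfalso
              have hzneg : z < 0 := lt_of_le_of_ne (not_lt.1 h) (by simpa using hz)
              have : (0:ℝ) ≤ min (Fμ x) (Fν x) :=
                le_min (densCdf_nonneg hμ0 x) (densCdf_nonneg hν0 x)
              exact absurd (lt_of_le_of_lt this (lt_of_le_of_lt h1 hzneg)) (by simp)
            · -- 1 ≤ z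
              have hmax : max (Fμ x) (Fν x) ≤ 1 := by
                apply max_le
                · simpa [hμt] using densCdf_le_total hμ0 hμi x
                · simpa [hνt] using densCdf_le_total hν0 hνi x
              exact le_trans hmax (not_lt.1 h)
          rw [this]
          simp
    _ = ∫⁻ z in Ioo (0:ℝ) 1, ENNReal.ofReal |pseudoInv μ z - pseudoInv ν z| :=
        lintegral_indicator measurableSet_Ioo _

end step1

section mod
variable {a b : ℝ} {μ : ℝ → ℝ}

/-- Globally monotone modification of the pseudo-inverse. -/
noncomputable def pseudoInvMod (μ : ℝ → ℝ) (a b z : ℝ) : ℝ :=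
  if z < 1 then (if 0 ≤ z then pseudoInv μ z else a) else b

lemma pseudoInvMod_eq {z : ℝ} (h0 : 0 ≤ z) (h1 : z < 1) :
    pseudoInvMod μ a b z = pseudoInv μ z := by
  simp [pseudoInvMod, h0, h1]

lemma pseudoInvMod_mem (hμ0 : ∀ t, 0 ≤ μ t) (hμi : Integrable μ) (htot : (∫ t, μ t) = 1)
    (hsupp : Function.support μ ⊆ Set.Icc a b) (hab : a ≤ b) (z : ℝ) :
    pseudoInvMod μ a b z ∈ Icc a b := by
  unfold pseudoInvMod
  split_ifs with h1 h0
  · exact pseudoInv_mem hμ0 hμi htot hsupp h0 h1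
  · exact ⟨le_rfl, hab⟩
  · exact ⟨hab, le_rfl⟩

lemma pseudoInvMod_monotone (hμ0 : ∀ t, 0 ≤ μ t) (hμi : Integrable μ)
    (htot : (∫ t, μ t) = 1) (hsupp : Function.support μ ⊆ Set.Icc a b) (hab : a ≤ b) :
    Monotone (pseudoInvMod μ a b) := by
  intro z1 z2 h
  by_cases h2 : z2 < 1
  · by_cases h2' : (0:ℝ) ≤ z2
    · have h1 : z1 < 1 := lt_of_le_of_lt h h2
      rw [pseudoInvMod_eq h2' h2]
      by_cases h1' : (0:ℝ) ≤ z1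
      · rw [pseudoInvMod_eq h1' h1]
        apply csInf_le_csInf ⟨a, cdfSet_subset_Ici hμ0 hsupp h1'⟩
          ⟨b, cdfSet_nonempty hμi htot hsupp h2⟩
        intro x hx
        exact lt_of_le_of_lt h hx
      · have : pseudoInvMod μ a b z1 = a := by simp [pseudoInvMod, h1, h1']
        rw [this]
        exact (pseudoInv_mem hμ0 hμi htot hsupp h2' h2).1
    · have h1' : ¬ (0:ℝ) ≤ z1 := fun hc => h2' (le_trans hc h)
      have h1 : z1 < 1 := lt_of_le_of_lt h h2
      simp [pseudoInvMod, h1, h1', h2, h2']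
  · have hb : pseudoInvMod μ a b z2 = b := by simp [pseudoInvMod, h2]
    rw [hb]
    exact (pseudoInvMod_mem hμ0 hμi htot hsupp hab z1).2

end mod

section conv
variable {a b : ℝ} {μ ν : ℝ → ℝ}

lemma w1_lintegral_eq (hab : a < b)
    (hμ0 : ∀ t, 0 ≤ μ t) (hν0 : ∀ t, 0 ≤ ν t)
    (hμi : Integrable μ) (hνi : Integrable ν)
    (hμt : (∫ t, μ t) = 1) (hνt : (∫ t, ν t) = 1)
    (hμs : Function.support μ ⊆ Set.Icc a b) (hνs : Function.support ν ⊆ Set.Icc a b) :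
    ∫⁻ z in Ioo (0:ℝ) 1, ENNReal.ofReal |pseudoInv μ z - pseudoInv ν z| =
      ENNReal.ofReal (∫ z in (0:ℝ)..1, |pseudoInv μ z - pseudoInv ν z|) := by
  set g : ℝ → ℝ := fun z => |pseudoInvMod μ a b z - pseudoInvMod ν a b z| with hg
  have hgm : Measurable g :=
    ((pseudoInvMod_monotone hμ0 hμi hμt hμs hab.le).measurable.sub
      (pseudoInvMod_monotone hν0 hνi hνt hνs hab.le).measurable).abs
  have hbd : ∀ z, |g z| ≤ 2 * (|a| + |b|) := by
    intro z
    have h1 := pseudoInvMod_mem hμ0 hμi hμt hμs hab.le z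
    have h2 := pseudoInvMod_mem hν0 hνi hνt hνs hab.le z
    have e1 : |pseudoInvMod μ a b z| ≤ |a| + |b| := by
      rw [abs_le]; constructor
      · linarith [h1.1, neg_abs_le a, abs_nonneg b]
      · linarith [h1.2, le_abs_self b, abs_nonneg a]
    have e2 : |pseudoInvMod ν a b z| ≤ |a| + |b| := by
      rw [abs_le]; constructor
      · linarith [h2.1, neg_abs_le a, abs_nonneg b]
      · linarith [h2.2, le_abs_self b, abs_nonneg a]
    rw [abs_abs]
    calc |pseudoInvMod μ a b z - pseudoInvMod ν a b z| ≤
        |pseudoInvMod μ a b z| + |pseudoInvMod ν a b z| := abs_sub _ _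
      _ ≤ 2 * (|a| + |b|) := by linarith
  have hgint : IntegrableOn g (Ioc (0:ℝ) 1) volume := by
    apply Integrable.mono' (g := fun _ => 2 * (|a| + |b|))
    · show IntegrableOn (fun _ : ℝ => 2 * (|a| + |b|)) (Ioc (0:ℝ) 1) volume
      rw [integrableOn_const_iff]
      right
      rw [Real.volume_Ioc]
      exact ENNReal.ofReal_lt_top
    · exact hgm.aestronglyMeasurable
    · exact Filter.Eventually.of_forall fun z => (Real.norm_eq_abs _).le.trans_eq rfl |>.trans
        (hbd z)
  have hae : (fun z => |pseudoInv μ z - pseudoInv ν z|)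
      =ᵐ[volume.restrict (Ioc (0:ℝ) 1)] g := by
    have h1 : ∀ᵐ z ∂(volume.restrict (Ioc (0:ℝ) 1)), z ≠ 1 := by
      apply ae_restrict_of_ae
      rw [ae_iff]
      have : {z : ℝ | ¬ z ≠ 1} = {1} := by ext z; simp
      rw [this]
      exact Real.volume_singleton
    have h2 : ∀ᵐ z ∂(volume.restrict (Ioc (0:ℝ) 1)), z ∈ Ioc (0:ℝ) 1 :=
      ae_restrict_mem measurableSet_Ioc
    filter_upwards [h1, h2] with z hz1 hz2
    have hz : z ∈ Ioo (0:ℝ) 1 := ⟨hz2.1, lt_of_le_of_ne hz2.2 hz1⟩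
    rw [hg]
    simp only
    rw [pseudoInvMod_eq hz.1.le hz.2, pseudoInvMod_eq hz.1.le hz.2]
  calc ∫⁻ z in Ioo (0:ℝ) 1, ENNReal.ofReal |pseudoInv μ z - pseudoInv ν z|
      = ∫⁻ z in Ioo (0:ℝ) 1, ENNReal.ofReal (g z) := by
        apply setLIntegral_congr_fun measurableSet_Ioo
        intro z hz
        rw [hg]
        simp only
        rw [pseudoInvMod_eq hz.1.le hz.2, pseudoInvMod_eq hz.1.le hz.2]
    _ = ∫⁻ z in Ioc (0:ℝ) 1, ENNReal.ofReal (g z) := by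
        rw [Measure.restrict_congr_set Ioo_ae_eq_Ioc]
    _ = ENNReal.ofReal (∫ z in Ioc (0:ℝ) 1, g z) :=
        (ofReal_integral_eq_lintegral_ofReal hgint
          (Filter.Eventually.of_forall fun z => abs_nonneg _)).symm
    _ = ENNReal.ofReal (∫ z in (0:ℝ)..1, |pseudoInv μ z - pseudoInv ν z|) := by
        rw [intervalIntegral.integral_of_le zero_le_one]
        congr 1
        exact (integral_congr_ae hae).symm

end conv

section var

lemma evar_sub_le (f g : ℝ → ℝ) (s : Set ℝ) :
    eVariationOn (fun x => f x - g x) s ≤ eVariationOn f s + eVariationOn g s := by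
  apply iSup_le
  rintro ⟨n, u, hu, us⟩
  calc (∑ i ∈ Finset.range n, edist (f (u (i+1)) - g (u (i+1))) (f (u i) - g (u i)))
      ≤ ∑ i ∈ Finset.range n, (edist (f (u (i+1))) (f (u i)) + edist (g (u (i+1))) (g (u i))) := by
        apply Finset.sum_le_sum
        intro i _
        rw [edist_dist, edist_dist, edist_dist, ← ENNReal.ofReal_add dist_nonneg dist_nonneg]
        exact ENNReal.ofReal_le_ofReal (dist_sub_sub_le _ _ _ _)
    _ = (∑ i ∈ Finset.range n, edist (f (u (i+1))) (f (u i))) +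
          ∑ i ∈ Finset.range n, edist (g (u (i+1))) (g (u i)) := Finset.sum_add_distrib
    _ ≤ eVariationOn f s + eVariationOn g s :=
        add_le_add (eVariationOn.sum_le (f := f) (n := n) hu us) (eVariationOn.sum_le (f := g) (n := n) hu us)

lemma ae_translate {f g : ℝ → ℝ} (h : f =ᵐ[volume] g) (c : ℝ) :
    (fun x => f (x + c)) =ᵐ[volume] fun x => g (x + c) :=
  (measurePreserving_add_right (volume : Measure ℝ) c).quasiMeasurePreserving.ae_eq h

lemma translation_est {a b : ℝ} {f f' : ℝ → ℝ} (hf' : Measurable f')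
    (hae : f' =ᵐ[volume] f) (hfsupp : ∀ x, x ∉ Icc a b → f x = 0) {s : ℝ} (hs : 0 < s) :
    ∫⁻ x, ENNReal.ofReal |f' (x + s) - f' x| ≤ ENNReal.ofReal s * eVariationOn f univ := by
  set g' : ℝ → ℝ≥0∞ := fun x => ENNReal.ofReal |f' (x + s) - f' x| with hg'
  have hg'm : Measurable g' :=
    ((hf'.comp (measurable_id.add_const s)).sub hf').abs.ennreal_ofReal
  set N : ℕ := ⌈(b - a) / s⌉₊ + 2 with hN
  set c : ℝ := a - s with hc
  have hNb : b < c + N * s := by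
    have h1 : (b - a) / s ≤ (⌈(b - a) / s⌉₊ : ℝ) := Nat.le_ceil _
    have h2 : b - a ≤ (⌈(b - a) / s⌉₊ : ℝ) * s := by
      rw [div_le_iff₀ hs] at h1
      exact h1
    have h3 : (N : ℝ) * s = (⌈(b - a) / s⌉₊ : ℝ) * s + 2 * s := by
      rw [hN]; push_cast; ring
    rw [hc, h3]
    linarith
  have hsplit : ∫⁻ x, g' x = (∫⁻ x in Ico c (c + N * s), g' x) +
      ∫⁻ x in (Ico c (c + N * s))ᶜ, g' x := (lintegral_add_compl g' measurableSet_Ico).symm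
  have hcompl : ∫⁻ x in (Ico c (c + N * s))ᶜ, g' x = 0 := by
    have hzero : ∀ᵐ x ∂volume, x ∈ (Ico c (c + N * s))ᶜ → g' x = 0 := by
      filter_upwards [hae, ae_translate hae s] with x hx1 hx2
      intro hxc
      simp only [mem_compl_iff, mem_Ico, not_and, not_lt, not_le] at hxc
      have hfx : f x = 0 ∧ f (x + s) = 0 := by
        rcases lt_or_ge x c with hlt | hge
        · constructor
          · exact hfsupp x (fun hmem => absurd hmem.1 (by rw [hc] at hlt; linarith))
          · exact hfsupp (x + s) (fun hmem => absurd hmem.1 (by rw [hc] at hlt; linarith))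
        · have hxb : b < x := lt_of_lt_of_le hNb (hxc hge)
          constructor
          · exact hfsupp x (fun hmem => absurd hmem.2 (by linarith))
          · exact hfsupp (x + s) (fun hmem => absurd hmem.2 (by linarith))
      rw [hg']
      simp only [hx1, hx2, hfx.1, hfx.2, sub_zero, abs_zero, ENNReal.ofReal_zero]
    rw [← lintegral_zero]
    apply lintegral_congr_ae
    exact (ae_restrict_iff' measurableSet_Ico.compl).2 hzero
  have hpiece : ∀ k : ℕ, ∫⁻ x in Ico (c + k * s) (c + k * s + s), g' x =
      ∫⁻ y in Ico (0:ℝ) s, g' (y + (c + k * s)) := by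
    intro k
    have hmp := (measurePreserving_add_right (volume : Measure ℝ) (c + k * s))
      |>.setLIntegral_comp_preimage_emb (measurableEmbedding_addRight _) g'
        (Ico (c + k * s) (c + k * s + s))
    have hset : (fun x : ℝ => x + (c + k * s)) ⁻¹' Ico (c + k * s) (c + k * s + s) =
        Ico (0:ℝ) s := by
      ext y
      simp only [mem_preimage, mem_Ico]
      constructor
      · rintro ⟨h1, h2⟩
        exact ⟨by linarith, by linarith⟩
      · rintro ⟨h1, h2⟩
        exact ⟨by linarith, by linarith⟩
    rw [hset] at hmp
    rw [← hmp]
  have hmain : ∀ n : ℕ, ∫⁻ x in Ico c (c + n * s), g' x =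
      ∑ k ∈ Finset.range n, ∫⁻ x in Ico (c + k * s) (c + k * s + s), g' x := by
    intro n
    induction n with
    | zero => simp
    | succ n ih =>
      have hn0 : (0:ℝ) ≤ (n:ℝ) * s := mul_nonneg (Nat.cast_nonneg n) hs.le
      have hle1 : c ≤ c + n * s := by linarith
      have hle2 : c + n * s ≤ c + n * s + s := by linarith
      have hcast : c + ((n+1 : ℕ) : ℝ) * s = c + (n:ℝ) * s + s := by push_cast; ring
      rw [hcast, ← Ico_union_Ico_eq_Ico hle1 hle2,
        lintegral_union measurableSet_Ico Ico_disjoint_Ico_same, ih, Finset.sum_range_succ]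
  calc ∫⁻ x, g' x = ∫⁻ x in Ico c (c + N * s), g' x := by rw [hsplit, hcompl, add_zero]
    _ = ∑ k ∈ Finset.range N, ∫⁻ x in Ico (c + k * s) (c + k * s + s), g' x := hmain N
    _ = ∑ k ∈ Finset.range N, ∫⁻ y in Ico (0:ℝ) s, g' (y + (c + k * s)) :=
        Finset.sum_congr rfl fun k _ => hpiece k
    _ = ∫⁻ y in Ico (0:ℝ) s, ∑ k ∈ Finset.range N, g' (y + (c + k * s)) := by
        rw [lintegral_finset_sum']
        intro k _
        exact (hg'm.comp (measurable_id.add_const _)).aemeasurable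
    _ ≤ ∫⁻ _ in Ico (0:ℝ) s, eVariationOn f univ := by
        apply lintegral_mono_ae
        apply ae_restrict_of_ae
        have hallk : ∀ᵐ y ∂(volume : Measure ℝ),
            ∀ k : ℕ, f' (y + (c + k * s)) = f (y + (c + k * s)) := by
          rw [ae_all_iff]
          intro k
          exact ae_translate hae (c + k * s)
        filter_upwards [hallk] with y hy
        set u : ℕ → ℝ := fun k => y + (c + k * s) with hu_def
        have hrw : ∀ k ∈ Finset.range N, g' (y + (c + k * s)) =
            edist (f (u (k+1))) (f (u k)) := by
          intro k _
          have h0 : g' (u k) = ENNReal.ofReal |f' (u k + s) - f' (u k)| := rfl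
          have e1 : u k + s = u (k + 1) := by
            rw [hu_def]; push_cast; ring
          show g' (u k) = _
          rw [h0, e1, hy (k+1), hy k, edist_dist, Real.dist_eq]
        rw [Finset.sum_congr rfl hrw]
        have hu_mono : Monotone u := by
          intro k₁ k₂ hk
          rw [hu_def]
          simp only
          have hcast : (k₁ : ℝ) ≤ (k₂ : ℝ) := Nat.cast_le.2 hk
          nlinarith
        exact eVariationOn.sum_le (f := f) (n := N) hu_mono (fun i => mem_univ _)
    _ = ENNReal.ofReal s * eVariationOn f univ := by
        rw [setLIntegral_const, Real.volume_Ico, sub_zero, mul_comm]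

end var

section step2
variable {a b : ℝ} {μ ν : ℝ → ℝ}

lemma F_integrable (hμ0 : ∀ t, 0 ≤ μ t) (hν0 : ∀ t, 0 ≤ ν t)
    (hμi : Integrable μ) (hνi : Integrable ν)
    (hμt : (∫ t, μ t) = 1) (hνt : (∫ t, ν t) = 1)
    (hμs : Function.support μ ⊆ Set.Icc a b) (hνs : Function.support ν ⊆ Set.Icc a b) :
    Integrable (fun x => densCdf μ x - densCdf ν x) := by
  have hm : Measurable fun x => densCdf μ x - densCdf ν x :=
    (densCdf_mono hμ0 hμi).measurable.sub (densCdf_mono hν0 hνi).measurable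
  have hbound : Integrable ((Icc a b).indicator fun _ => (2:ℝ)) := by
    apply ((integrableOn_const_iff (C := (2:ℝ))).2 (Or.inr _)).integrable_indicator measurableSet_Icc
    rw [Real.volume_Icc]
    exact ENNReal.ofReal_lt_top
  apply Integrable.mono' hbound hm.aestronglyMeasurable
  apply Filter.Eventually.of_forall
  intro x
  rw [Real.norm_eq_abs]
  by_cases hx : x ∈ Icc a b
  · rw [indicator_of_mem hx]
    have h1 : 0 ≤ densCdf μ x := densCdf_nonneg hμ0 x
    have h2 : densCdf μ x ≤ 1 := by simpa [hμt] using densCdf_le_total hμ0 hμi x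
    have h3 : 0 ≤ densCdf ν x := densCdf_nonneg hν0 x
    have h4 : densCdf ν x ≤ 1 := by simpa [hνt] using densCdf_le_total hν0 hνi x
    rw [abs_le]
    constructor <;> linarith
  · rw [indicator_of_notMem hx]
    simp only [mem_Icc, not_and_or, not_le] at hx
    rcases hx with hx | hx
    · rw [densCdf_eq_zero hμs hx, densCdf_eq_zero hνs hx]
      simp
    · rw [densCdf_eq_total hμi hμs hx.le, densCdf_eq_total hνi hνs hx.le, hμt, hνt]
      simp

lemma step2 (hab : a < b)
    (hμ0 : ∀ t, 0 ≤ μ t) (hν0 : ∀ t, 0 ≤ ν t)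
    (hμi : Integrable μ) (hνi : Integrable ν)
    (hμt : (∫ t, μ t) = 1) (hνt : (∫ t, ν t) = 1)
    (hμs : Function.support μ ⊆ Set.Icc a b) (hνs : Function.support ν ⊆ Set.Icc a b)
    (hμv : BoundedVariationOn μ Set.univ) (hνv : BoundedVariationOn ν Set.univ)
    {h : ℝ} (hh : 0 < h) :
    h * ∫ t, |μ t - ν t| ≤ h^2/2 * ((eVariationOn μ Set.univ).toReal +
      (eVariationOn ν Set.univ).toReal) + 2 * ∫ x, |densCdf μ x - densCdf ν x| := by
  set f : ℝ → ℝ := fun t => μ t - ν t with hf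
  set F : ℝ → ℝ := fun x => densCdf μ x - densCdf ν x with hF
  have hfi : Integrable f := hμi.sub hνi
  have hFm : Measurable F :=
    (densCdf_mono hμ0 hμi).measurable.sub (densCdf_mono hν0 hνi).measurable
  have hFi : Integrable F := F_integrable hμ0 hν0 hμi hνi hμt hνt hμs hνs
  set V : ℝ := (eVariationOn μ Set.univ).toReal + (eVariationOn ν Set.univ).toReal with hV
  set L : ℝ := ∫ t, |f t| with hL
  set W : ℝ := ∫ x, |F x| with hW
  have hL0 : 0 ≤ L := integral_nonneg fun t => abs_nonneg _
  have hW0 : 0 ≤ W := integral_nonneg fun t => abs_nonneg _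
  have hV0 : 0 ≤ V := add_nonneg ENNReal.toReal_nonneg ENNReal.toReal_nonneg
  -- measurable representative of f
  obtain ⟨f₀, hf₀m, hf₀ae⟩ : ∃ f₀ : ℝ → ℝ, Measurable f₀ ∧ f₀ =ᵐ[volume] f :=
    ⟨hfi.aestronglyMeasurable.mk f, hfi.aestronglyMeasurable.stronglyMeasurable_mk.measurable,
      hfi.aestronglyMeasurable.ae_eq_mk.symm⟩
  have hfsupp : ∀ x, x ∉ Icc a b → f x = 0 := by
    intro x hx
    have h1 : μ x = 0 := by
      by_contra hc; exact hx (hμs hc)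
    have h2 : ν x = 0 := by
      by_contra hc; exact hx (hνs hc)
    simp [hf, h1, h2]
  -- variation bound
  have hvarf : eVariationOn f Set.univ ≤ ENNReal.ofReal V := by
    calc eVariationOn f Set.univ ≤ eVariationOn μ Set.univ + eVariationOn ν Set.univ :=
          evar_sub_le μ ν Set.univ
      _ = ENNReal.ofReal V := by
          rw [hV, ENNReal.ofReal_add ENNReal.toReal_nonneg ENNReal.toReal_nonneg,
            ENNReal.ofReal_toReal hμv, ENNReal.ofReal_toReal hνv]
  -- cdf increment identity
  have hcdf_inc : ∀ x : ℝ, ∫ t in Ioc x (x + h), f t = F (x + h) - F x := by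
    intro x
    have key : ∀ (ρ : ℝ → ℝ), Integrable ρ →
        ∫ t in Ioc x (x + h), ρ t = densCdf ρ (x + h) - densCdf ρ x := by
      intro ρ hρ
      have hu : Iic x ∪ Ioc x (x + h) = Iic (x + h) := Iic_union_Ioc_eq_Iic (by linarith)
      have hd : Disjoint (Iic x) (Ioc x (x + h)) := Iic_disjoint_Ioc le_rfl
      have := setIntegral_union hd measurableSet_Ioc hρ.integrableOn hρ.integrableOn
      rw [hu] at this
      rw [densCdf, densCdf, this]
      ring
    rw [hF]
    simp only
    rw [show (∫ t in Ioc x (x + h), f t) =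
        (∫ t in Ioc x (x + h), μ t) - ∫ t in Ioc x (x + h), ν t from
        integral_sub hμi.integrableOn hνi.integrableOn,
      key μ hμi, key ν hνi]
    ring
  -- pointwise inequality
  have hpt : ∀ x : ℝ, ENNReal.ofReal (h * |f x|) ≤
      (∫⁻ t in Ioc x (x + h), ENNReal.ofReal |f t - f x|) + ENNReal.ofReal |F (x + h) - F x| := by
    intro x
    have hIconst : ∫ t in Ioc x (x + h), f x ∂volume = h * f x := by
      rw [setIntegral_const, Real.volume_real_Ioc_of_le (a := x) (b := x + h) (by linarith), smul_eq_mul]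
      rw [show x + h - x = h by ring]
    have hIf : IntegrableOn f (Ioc x (x + h)) volume := hfi.integrableOn
    have hIc : IntegrableOn (fun _ => f x) (Ioc x (x + h)) volume := by
      apply (integrableOn_const_iff (C := f x)).2 (Or.inr _)
      rw [Real.volume_Ioc]
      exact ENNReal.ofReal_lt_top
    have habs : h * |f x| ≤ (∫ t in Ioc x (x + h), |f t - f x|) + |F (x + h) - F x| := by
      have e1 : h * f x = (∫ t in Ioc x (x + h), (f x - f t)) + ∫ t in Ioc x (x + h), f t := by
        rw [integral_sub hIc hIf, hIconst]
        ring
      have e2 : |h * f x| ≤ |∫ t in Ioc x (x + h), (f x - f t)| + |∫ t in Ioc x (x + h), f t| := by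
        rw [e1]; exact abs_add_le _ _
      have e3 : |∫ t in Ioc x (x + h), (f x - f t)| ≤ ∫ t in Ioc x (x + h), |f t - f x| := by
        calc |∫ t in Ioc x (x + h), (f x - f t)| ≤ ∫ t in Ioc x (x + h), |f x - f t| :=
              by
                have := norm_integral_le_integral_norm (μ := volume.restrict (Ioc x (x+h)))
                  (fun t => f x - f t)
                simpa [Real.norm_eq_abs] using this
          _ = ∫ t in Ioc x (x + h), |f t - f x| := by
              congr 1; ext t; rw [abs_sub_comm]
      rw [abs_mul, abs_of_pos hh] at e2
      rw [hcdf_inc x] at e2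
      linarith
    have hint : Integrable (fun t => |f t - f x|) (volume.restrict (Ioc x (x + h))) :=
      (hIf.sub hIc).abs
    calc ENNReal.ofReal (h * |f x|) ≤
        ENNReal.ofReal ((∫ t in Ioc x (x + h), |f t - f x|) + |F (x + h) - F x|) :=
          ENNReal.ofReal_le_ofReal habs
      _ = ENNReal.ofReal (∫ t in Ioc x (x + h), |f t - f x|) +
          ENNReal.ofReal |F (x + h) - F x| :=
          ENNReal.ofReal_add (integral_nonneg fun t => abs_nonneg _) (abs_nonneg _)
      _ = (∫⁻ t in Ioc x (x + h), ENNReal.ofReal |f t - f x|) + ENNReal.ofReal |F (x + h) - F x| := by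
          rw [ofReal_integral_eq_lintegral_ofReal hint
            (Filter.Eventually.of_forall fun t => abs_nonneg _)]
  -- B term
  have hBmeas : Measurable fun x => ENNReal.ofReal |F (x + h) - F x| :=
    ((hFm.comp (measurable_id.add_const h)).sub hFm).abs.ennreal_ofReal
  have hWid : ENNReal.ofReal W = ∫⁻ x, ENNReal.ofReal |F x| :=
    ofReal_integral_eq_lintegral_ofReal hFi.abs
      (Filter.Eventually.of_forall fun x => abs_nonneg _)
  have hBterm : ∫⁻ x, ENNReal.ofReal |F (x + h) - F x| ≤ 2 * ENNReal.ofReal W := by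
    calc ∫⁻ x, ENNReal.ofReal |F (x + h) - F x|
        ≤ ∫⁻ x, (ENNReal.ofReal |F (x + h)| + ENNReal.ofReal |F x|) := by
          apply lintegral_mono
          intro x
          dsimp only
          rw [← ENNReal.ofReal_add (abs_nonneg _) (abs_nonneg _)]
          exact ENNReal.ofReal_le_ofReal (abs_sub _ _)
      _ = (∫⁻ x, ENNReal.ofReal |F (x + h)|) + ∫⁻ x, ENNReal.ofReal |F x| :=
          lintegral_add_left ((hFm.comp (measurable_id.add_const h)).abs.ennreal_ofReal) _
      _ = (∫⁻ x, ENNReal.ofReal |F x|) + ∫⁻ x, ENNReal.ofReal |F x| := by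
          congr 1
          exact (measurePreserving_add_right (volume : Measure ℝ) h).lintegral_comp_emb
            (measurableEmbedding_addRight h) (fun y => ENNReal.ofReal |F y|)
      _ = 2 * ENNReal.ofReal W := by rw [← hWid, two_mul]
  -- A term
  have hAterm : (∫⁻ x, ∫⁻ t in Ioc x (x + h), ENNReal.ofReal |f t - f x|) ≤
      ENNReal.ofReal (h^2/2) * ENNReal.ofReal V := by
    have hstep1 : (∫⁻ x, ∫⁻ t in Ioc x (x + h), ENNReal.ofReal |f t - f x|) =
        ∫⁻ x, ∫⁻ s in Ioc (0:ℝ) h, ENNReal.ofReal |f₀ (x + s) - f₀ x| := by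
      apply lintegral_congr_ae
      filter_upwards [hf₀ae] with x hx
      have e1 : (∫⁻ t in Ioc x (x + h), ENNReal.ofReal |f t - f x|) =
          ∫⁻ t in Ioc x (x + h), ENNReal.ofReal |f₀ t - f₀ x| := by
        apply lintegral_congr_ae
        apply ae_restrict_of_ae
        filter_upwards [hf₀ae] with t ht
        rw [ht, hx]
      rw [e1]
      have hmp := (measurePreserving_add_right (volume : Measure ℝ) x)
        |>.setLIntegral_comp_preimage_emb (measurableEmbedding_addRight x)
          (fun t => ENNReal.ofReal |f₀ t - f₀ x|) (Ioc x (x + h))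
      have hset : (fun s : ℝ => s + x) ⁻¹' Ioc x (x + h) = Ioc (0:ℝ) h := by
        ext s
        simp only [mem_preimage, mem_Ioc]
        constructor
        · rintro ⟨h1, h2⟩; exact ⟨by linarith, by linarith⟩
        · rintro ⟨h1, h2⟩; exact ⟨by linarith, by linarith⟩
      rw [hset] at hmp
      rw [← hmp]
      exact lintegral_congr fun s => by rw [add_comm]
    rw [hstep1]
    have hunc : Measurable (Function.uncurry fun x s : ℝ => ENNReal.ofReal |f₀ (x + s) - f₀ x|) :=
      ((hf₀m.comp measurable_add).sub (hf₀m.comp measurable_fst)).abs.ennreal_ofReal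
    rw [lintegral_lintegral_swap hunc.aemeasurable]
    calc (∫⁻ s in Ioc (0:ℝ) h, ∫⁻ x, ENNReal.ofReal |f₀ (x + s) - f₀ x|)
        ≤ ∫⁻ s in Ioc (0:ℝ) h, ENNReal.ofReal s * ENNReal.ofReal V := by
          apply lintegral_mono_ae
          filter_upwards [ae_restrict_mem measurableSet_Ioc] with s hs
          calc (∫⁻ x, ENNReal.ofReal |f₀ (x + s) - f₀ x|)
              ≤ ENNReal.ofReal s * eVariationOn f Set.univ :=
                translation_est hf₀m hf₀ae hfsupp hs.1
            _ ≤ ENNReal.ofReal s * ENNReal.ofReal V := mul_le_mul_right hvarf _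
      _ = (∫⁻ s in Ioc (0:ℝ) h, ENNReal.ofReal s) * ENNReal.ofReal V :=
          lintegral_mul_const _ measurable_id.ennreal_ofReal
      _ = ENNReal.ofReal (h^2/2) * ENNReal.ofReal V := by
          congr 1
          have hint : IntegrableOn (fun s : ℝ => s) (Ioc (0:ℝ) h) volume :=
            continuous_id.integrableOn_Ioc
          rw [← ofReal_integral_eq_lintegral_ofReal hint
            ((ae_restrict_iff' measurableSet_Ioc).2
              (Filter.Eventually.of_forall fun s hs => hs.1.le))]
          congr 1
          rw [← intervalIntegral.integral_of_le hh.le, integral_id]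
          ring
  -- combine
  have hcomb := lintegral_mono (μ := (volume : Measure ℝ)) hpt
  have hLHS : (∫⁻ x, ENNReal.ofReal (h * |f x|)) = ENNReal.ofReal (h * L) := by
    rw [show h * L = ∫ t, h * |f t| from (integral_const_mul h _).symm]
    exact (ofReal_integral_eq_lintegral_ofReal (hfi.abs.const_mul h)
      (Filter.Eventually.of_forall fun t => mul_nonneg hh.le (abs_nonneg _))).symm
  have hRHS : (∫⁻ x, ((∫⁻ t in Ioc x (x + h), ENNReal.ofReal |f t - f x|) +
      ENNReal.ofReal |F (x + h) - F x|)) =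
      (∫⁻ x, ∫⁻ t in Ioc x (x + h), ENNReal.ofReal |f t - f x|) +
        ∫⁻ x, ENNReal.ofReal |F (x + h) - F x| :=
    lintegral_add_right _ hBmeas
  rw [hLHS, hRHS] at hcomb
  have hfinal : ENNReal.ofReal (h * L) ≤ ENNReal.ofReal (h^2/2 * V + 2 * W) := by
    calc ENNReal.ofReal (h * L) ≤ ENNReal.ofReal (h^2/2) * ENNReal.ofReal V +
          2 * ENNReal.ofReal W := hcomb.trans (add_le_add hAterm hBterm)
      _ = ENNReal.ofReal (h^2/2 * V + 2 * W) := by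
          rw [ENNReal.ofReal_add (mul_nonneg (by positivity) hV0) (mul_nonneg (by norm_num) hW0),
            ENNReal.ofReal_mul (p := h^2/2) (by positivity),
            ENNReal.ofReal_mul (p := (2:ℝ)) (by norm_num)]
          norm_num
  exact (ENNReal.ofReal_le_ofReal_iff (by positivity)).1 hfinal

end step2

lemma optimize {L V W Wp : ℝ} (hL0 : 0 ≤ L) (hV : 0 ≤ V) (hW : 0 ≤ W) (hWp0 : 0 ≤ Wp)
    (hWp : W ≤ Wp) (hL : ∀ h : ℝ, 0 < h → h * L ≤ h^2/2 * V + 2 * W) :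
    L ≤ 2 * Real.sqrt V * Real.sqrt Wp := by
  have hRHS0 : 0 ≤ 2 * Real.sqrt V * Real.sqrt Wp := by positivity
  rcases eq_or_lt_of_le hW with hW0 | hWpos
  · -- W = 0
    rcases eq_or_lt_of_le hV with hV0 | hVpos
    · -- V = 0 as well
      have := hL 1 one_pos
      rw [← hW0, ← hV0] at this
      simp at this
      linarith
    · -- V > 0 : L ≤ h V / 2 for all h, so L ≤ 0
      have hle : L ≤ 0 := by
        by_contra hc
        push_neg at hc
        have h1 := hL (L / V) (div_pos hc hVpos)
        rw [← hW0] at h1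
        have h2 : (L/V)^2/2 * V = L^2/(2*V) := by field_simp
        rw [h2] at h1
        simp only [mul_zero, add_zero] at h1
        have h3 : L / V * L = L^2/V := by field_simp
        rw [h3] at h1
        have h4 : L^2/(2*V) < L^2/V := by
          apply div_lt_div_of_pos_left (by positivity) (by positivity)
          linarith
        linarith
      linarith
  · -- W > 0
    rcases eq_or_lt_of_le hV with hV0 | hVpos
    · -- V = 0 : L ≤ 2W/h for all h, so L ≤ 0
      have hle : L ≤ 0 := by
        by_contra hc
        push_neg at hc
        have h1 := hL (4 * W / L) (by positivity)
        rw [← hV0] at h1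
        simp only [mul_zero, zero_add] at h1
        have h2 : 4 * W / L * L = 4 * W := by field_simp
        rw [h2] at h1
        linarith
      linarith
    · -- main case
      set sV := Real.sqrt V with hsV
      set sW := Real.sqrt W with hsW
      have hsVpos : 0 < sV := Real.sqrt_pos.2 hVpos
      have hsWpos : 0 < sW := Real.sqrt_pos.2 hWpos
      have hsV2 : sV * sV = V := Real.mul_self_sqrt hV
      have hsW2 : sW * sW = W := Real.mul_self_sqrt hW
      set h := 2 * sW / sV with hhdef
      have hhpos : 0 < h := by positivity
      have h1 := hL h hhpos
      have hkey : h^2/2 * V + 2 * W = h * (2 * sV * sW) := by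
        rw [hhdef]
        field_simp
        rw [← hsV2, ← hsW2]
        ring
      rw [hkey] at h1
      have h2 : L ≤ 2 * sV * sW := le_of_mul_le_mul_left (by linarith [h1]) hhpos
      calc L ≤ 2 * sV * sW := h2
        _ ≤ 2 * sV * Real.sqrt Wp := by
            apply mul_le_mul_of_nonneg_left _ (by positivity)
            exact Real.sqrt_le_sqrt hWp
/-- Interpolation inequality between the `L¹` distance, the `BV` seminorm and
the 1-Wasserstein distance (the `L¹([0,1])` distance of the pseudo-inverses)
for compactly supported `BV` probability densities on a fixed interval. -/
theorem L1_BV_Wasserstein_interpolation (a b : ℝ) (hab : a < b) :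
    ∃ C : ℝ, 0 < C ∧ ∀ μ ν : ℝ → ℝ,
      (∀ t, 0 ≤ μ t) → (∀ t, 0 ≤ ν t) →
      Integrable μ → Integrable ν →
      (∫ t, μ t) = 1 → (∫ t, ν t) = 1 →
      Function.support μ ⊆ Set.Icc a b → Function.support ν ⊆ Set.Icc a b →
      BoundedVariationOn μ Set.univ → BoundedVariationOn ν Set.univ →
      ∫ t, |μ t - ν t| ≤
        C * Real.sqrt ((eVariationOn μ Set.univ).toReal +
            (eVariationOn ν Set.univ).toReal) *
          Real.sqrt (∫ z in (0 : ℝ)..1, |pseudoInv μ z - pseudoInv ν z|) := by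
  refine ⟨2, two_pos, ?_⟩
  intro μ ν hμ0 hν0 hμi hνi hμt hνt hμs hνs hμv hνv
  set W : ℝ := ∫ x, |densCdf μ x - densCdf ν x| with hWdef
  set Wp : ℝ := ∫ z in (0:ℝ)..1, |pseudoInv μ z - pseudoInv ν z| with hWpdef
  have hL0 : 0 ≤ ∫ t, |μ t - ν t| := integral_nonneg fun t => abs_nonneg _
  have hV0 : 0 ≤ (eVariationOn μ Set.univ).toReal + (eVariationOn ν Set.univ).toReal :=
    add_nonneg ENNReal.toReal_nonneg ENNReal.toReal_nonneg
  have hW0 : 0 ≤ W := integral_nonneg fun t => abs_nonneg _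
  have hWp0 : 0 ≤ Wp :=
    intervalIntegral.integral_nonneg zero_le_one fun z _ => abs_nonneg _
  have hFi : Integrable (fun x => densCdf μ x - densCdf ν x) :=
    F_integrable hμ0 hν0 hμi hνi hμt hνt hμs hνs
  have hWle : W ≤ Wp := by
    have h1 : ENNReal.ofReal W ≤ ENNReal.ofReal Wp := by
      rw [hWdef, ofReal_integral_eq_lintegral_ofReal hFi.abs
        (Filter.Eventually.of_forall fun x => abs_nonneg _)]
      calc ∫⁻ x, ENNReal.ofReal |densCdf μ x - densCdf ν x|
          ≤ ∫⁻ z in Ioo (0:ℝ) 1, ENNReal.ofReal |pseudoInv μ z - pseudoInv ν z| :=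
            w1_compare hab hμ0 hν0 hμi hνi hμt hνt hμs hνs
        _ = ENNReal.ofReal Wp :=
            w1_lintegral_eq hab hμ0 hν0 hμi hνi hμt hνt hμs hνs
    exact (ENNReal.ofReal_le_ofReal_iff hWp0).1 h1
  exact optimize hL0 hV0 hW0 hWp0 hWle
    (fun h hh => step2 hab hμ0 hν0 hμi hνi hμt hνt hμs hνs hμv hνv hh)
end
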